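/- Let A = (a_{ij}) be an n×n matrix over 𝒞 with at most finite entries, and let π(A) = (a_{ij}[0]) be the corresponding complex n×n matrix. Then for every μ ∈ ℂ the following are equivalent: (1) det(π(A) − μ·I) = 0 (determinant over ℂ); (2) there exists ν ∈ 𝒞 with det(A − ν·I) = 0 (determinant over the commutative ring 𝒞) and ν[0] = μ. In other words, π(σ(A)) = σ(π(A)), where spectra are the root sets of the characteristic polynomials. -/

import Mathlib

open Pointwise

noncomputable section

/-- A set of rational numbers is *left-finite* if below every rational number
it has only finitely many elements. -/
def LeftFinite (A : Set ℚ) : Prop := ∀ r : ℚ, {q ∈ A | q < r}.Finite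

theorem LeftFinite.mono {A B : Set ℚ} (h : LeftFinite B) (hAB : A ⊆ B) : LeftFinite A :=
  fun r => (h r).subset fun _ hq => ⟨hAB hq.1, hq.2⟩

theorem LeftFinite.union {A B : Set ℚ} (hA : LeftFinite A) (hB : LeftFinite B) :
    LeftFinite (A ∪ B) := by
  intro r
  have hsub : {q ∈ A ∪ B | q < r} ⊆ {q ∈ A | q < r} ∪ {q ∈ B | q < r} := by
    rintro q ⟨hq | hq, hr⟩
    · exact Or.inl ⟨hq, hr⟩
    · exact Or.inr ⟨hq, hr⟩
  exact ((hA r).union (hB r)).subset hsub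

theorem Set.Finite.leftFinite {A : Set ℚ} (h : A.Finite) : LeftFinite A :=
  fun _ => h.subset fun _ hq => hq.1

theorem LeftFinite.exists_lb {A : Set ℚ} (h : LeftFinite A) : ∃ m : ℚ, ∀ a ∈ A, m ≤ a := by
  rcases A.eq_empty_or_nonempty with rfl | ⟨a₀, ha₀⟩
  · exact ⟨0, by simp⟩
  · obtain ⟨m, hm⟩ := (h a₀).bddBelow
    refine ⟨min m a₀, fun a ha => ?_⟩
    rcases lt_or_ge a a₀ with hlt | hle
    · exact le_trans (min_le_left _ _) (hm ⟨ha, hlt⟩)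
    · exact le_trans (min_le_right _ _) hle

theorem LeftFinite.addSet {A B : Set ℚ} (hA : LeftFinite A) (hB : LeftFinite B) :
    LeftFinite (A + B) := by
  obtain ⟨mA, hmA⟩ := hA.exists_lb
  obtain ⟨mB, hmB⟩ := hB.exists_lb
  intro r
  apply Set.Finite.subset (((hA (r - mB)).prod (hB (r - mA))).image fun p : ℚ × ℚ => p.1 + p.2)
  rintro q ⟨hq, hqr⟩
  rw [Set.mem_add] at hq
  obtain ⟨a, ha, b, hb, rfl⟩ := hq
  exact ⟨(a, b), ⟨⟨ha, by linarith [hmB b hb]⟩, hb, by linarith [hmA a ha]⟩, rfl⟩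

/-- The Levi-Civita field over a coefficient ring `K`, realized as the subring of
Hahn series over `ℚ` consisting of those series with left-finite support.
(An element is a function `ℚ → K` with left-finite support; addition is pointwise
and multiplication is convolution.) -/
def LeviCivitaField (K : Type) [CommRing K] : Subring (HahnSeries ℚ K) where
  carrier := {x | LeftFinite x.support}
  zero_mem' := by
    have h : (0 : HahnSeries ℚ K).support = (∅ : Set ℚ) := HahnSeries.support_zero
    exact Set.Finite.leftFinite (by rw [h]; exact Set.finite_empty)
  one_mem' := by
    refine Set.Finite.leftFinite ((Set.finite_singleton (0 : ℚ)).subset ?_)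
    intro q hq
    by_contra hq0
    have hq0' : q ≠ 0 := by simpa using hq0
    have : (1 : HahnSeries ℚ K).coeff q = 0 := by
      rw [HahnSeries.coeff_one, if_neg hq0']
    exact hq this
  add_mem' := fun {x y} hx hy =>
    LeftFinite.mono (LeftFinite.union hx hy) (HahnSeries.support_add_subset x y)
  neg_mem' := fun {x} hx => LeftFinite.mono hx (le_of_eq HahnSeries.support_neg)
  mul_mem' := fun {x y} hx hy =>
    LeftFinite.mono (LeftFinite.addSet hx hy) HahnSeries.support_mul_subset

namespace LeviCivitaField

variable {K : Type} [CommRing K]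

/-- The coefficient `a[q]` of an element of the Levi-Civita field. -/
def coeff (x : LeviCivitaField K) (q : ℚ) : K := (x : HahnSeries ℚ K).coeff q

/-- The support `supp a` of an element of the Levi-Civita field. -/
def supp (x : LeviCivitaField K) : Set ℚ := (x : HahnSeries ℚ K).support

theorem leftFinite_supp (x : LeviCivitaField K) : LeftFinite (supp x) := x.2

/-- `λ(a)`: the minimum of the support of `a` (for nonzero `a`; `0` for `a = 0`). -/
def lam (x : LeviCivitaField K) : ℚ := (x : HahnSeries ℚ K).order

/-- `a` is at most finite if `a[q] = 0` for all `q < 0`. -/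
def AtMostFinite (x : LeviCivitaField K) : Prop := ∀ q : ℚ, q < 0 → coeff x q = 0

/-- A sequence is regular if the union of the supports of its elements is left-finite. -/
def Regular (a : ℕ → LeviCivitaField K) : Prop := LeftFinite (⋃ n, supp (a n))

/-- The seminorm `‖a‖_r = max {|a[q]| : q ≤ r, a[q] ≠ 0}` (equal to `0` if no such `q` exists). -/
def wnorm [Norm K] (x : LeviCivitaField K) (r : ℝ) : ℝ :=
  sSup ((fun q : ℚ => ‖coeff x q‖) '' {q : ℚ | (q : ℝ) ≤ r ∧ coeff x q ≠ 0})

/-- Weak convergence: `a_n →wk l` iff for every real `r > 0` there is `N` with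
`‖a_n − l‖_{1/r} < r` for all `n > N`. -/
def WeakTendsto [Norm K] (a : ℕ → LeviCivitaField K) (l : LeviCivitaField K) : Prop :=
  ∀ r : ℝ, 0 < r → ∃ N : ℕ, ∀ n : ℕ, n > N → wnorm (a n - l) (1 / r) < r

/-- Positivity on the real Levi-Civita field: `x ≻ 0` iff `x ≠ 0` and `x[λ(x)] > 0`. -/
def Pos (x : LeviCivitaField ℝ) : Prop := x ≠ 0 ∧ 0 < coeff x (lam x)

/-- `x ⪰ 0` on the real Levi-Civita field. -/
def Nonneg (x : LeviCivitaField ℝ) : Prop := x = 0 ∨ Pos x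

/-- `x ⪯ y` on the real Levi-Civita field. -/
def Le (x y : LeviCivitaField ℝ) : Prop := Nonneg (y - x)

/-- An element of the complex Levi-Civita field is *real* if all its coefficients are real;
this identifies `ℛ` with the subring `{z ∈ 𝒞 : z[q] ∈ ℝ for all q}` of `𝒞`. -/
def IsReal (x : LeviCivitaField ℂ) : Prop := ∀ q : ℚ, (coeff x q).im = 0

/-- `x ≻ 0` for elements of `ℛ` viewed inside `𝒞`: `x` is real, nonzero,
and its leading coefficient is positive. -/
def PosC (x : LeviCivitaField ℂ) : Prop := IsReal x ∧ x ≠ 0 ∧ 0 < (coeff x (lam x)).re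

/-- `x ⪰ 0` for elements of `ℛ` viewed inside `𝒞`. -/
def NonnegC (x : LeviCivitaField ℂ) : Prop := x = 0 ∨ PosC x

/-- `x ⪯ y` for elements of `ℛ` viewed inside `𝒞`. -/
def LeC (x y : LeviCivitaField ℂ) : Prop := NonnegC (y - x)

/-- `x ≺ y` for elements of `ℛ` viewed inside `𝒞`. -/
def LtC (x y : LeviCivitaField ℂ) : Prop := PosC (y - x)

/-- Conjugation on the complex Levi-Civita field: `conj(z)[q] = conj (z[q])`. -/
def conj (x : LeviCivitaField ℂ) : LeviCivitaField ℂ :=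
  ⟨⟨fun q => starRingEnd ℂ (coeff x q),
    (x : HahnSeries ℚ ℂ).isPWO_support.mono (fun q hq => by
      simp only [Function.mem_support, ne_eq, map_eq_zero] at hq
      exact hq)⟩,
   LeftFinite.mono x.2 (fun q hq => by
      have hq' : starRingEnd ℂ (coeff x q) ≠ 0 := hq
      have : coeff x q ≠ 0 := fun h => hq' (by rw [h, map_zero])
      exact this)⟩

/-- The monomial `d^q`: the element supported at `{q}` with value `1`. -/
def dpow (q : ℚ) : LeviCivitaField ℂ :=
  ⟨HahnSeries.single q (1 : ℂ),
    Set.Finite.leftFinite ((Set.finite_singleton q).subset HahnSeries.support_single_subset)⟩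

end LeviCivitaField


namespace LCF

/-- `v(x) ≥ γ`. -/
def Vge (γ : ℚ) (x : HahnSeries ℚ ℂ) : Prop := ∀ q < γ, x.coeff q = 0

theorem Vge.mono {a b : ℚ} (hab : a ≤ b) {x : HahnSeries ℚ ℂ} (h : Vge b x) : Vge a x :=
  fun q hq => h q (lt_of_lt_of_le hq hab)

theorem Vge.zero (γ : ℚ) : Vge γ (0 : HahnSeries ℚ ℂ) := fun _ _ => rfl

theorem Vge.add {γ : ℚ} {x y : HahnSeries ℚ ℂ} (hx : Vge γ x) (hy : Vge γ y) :
    Vge γ (x + y) := fun q hq => by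
  rw [HahnSeries.coeff_add, hx q hq, hy q hq, add_zero]

theorem Vge.neg {γ : ℚ} {x : HahnSeries ℚ ℂ} (hx : Vge γ x) : Vge γ (-x) := fun q hq => by
  rw [HahnSeries.coeff_neg, hx q hq, neg_zero]

theorem Vge.sub {γ : ℚ} {x y : HahnSeries ℚ ℂ} (hx : Vge γ x) (hy : Vge γ y) :
    Vge γ (x - y) := by
  rw [sub_eq_add_neg]; exact hx.add hy.neg

theorem Vge.mul {a b : ℚ} {x y : HahnSeries ℚ ℂ} (hx : Vge a x) (hy : Vge b y) :
    Vge (a + b) (x * y) := by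
  intro q hq
  rw [HahnSeries.coeff_mul]
  refine Finset.sum_eq_zero fun ij hij => ?_
  rw [Finset.mem_addAntidiagonal] at hij
  rcases lt_or_ge ij.1 a with hs | hs
  · rw [hx ij.1 hs, zero_mul]
  · have : ij.2 < b := by
      have := hij.2.2
      nlinarith [hij.2.2]
    rw [hy ij.2 this, mul_zero]

theorem Vge.mul_coeff {a b : ℚ} {x y : HahnSeries ℚ ℂ} (hx : Vge a x) (hy : Vge b y) :
    (x * y).coeff (a + b) = x.coeff a * y.coeff b := by
  rw [HahnSeries.coeff_mul]
  refine Finset.sum_eq_single (a, b) (fun ij hij hne => ?_) (fun h => ?_)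
  · rw [Finset.mem_addAntidiagonal] at hij
    rcases lt_trichotomy ij.1 a with hs | hs | hs
    · rw [hx ij.1 hs, zero_mul]
    · exfalso; apply hne
      have : ij.2 = b := by
        have := hij.2.2
        rw [hs] at this
        linarith
      exact Prod.ext hs this
    · have : ij.2 < b := by have := hij.2.2; linarith
      rw [hy ij.2 this, mul_zero]
  · rw [Finset.mem_addAntidiagonal, not_and_or, not_and_or] at h
    rcases h with h | h | h
    · rw [HahnSeries.mem_support, not_not] at h
      rw [h, zero_mul]
    · rw [HahnSeries.mem_support, not_not] at h
      rw [h, mul_zero]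
    · exact absurd rfl h

theorem eq_zero_of_forall_vge {x : HahnSeries ℚ ℂ} (h : ∀ γ, Vge γ x) : x = 0 := by
  ext q
  exact h (q + 1) q (by linarith)

theorem vge_order {x : HahnSeries ℚ ℂ} : Vge x.order x :=
  fun _ hq => HahnSeries.coeff_eq_zero_of_lt_order hq

theorem le_order_of_vge {γ : ℚ} {x : HahnSeries ℚ ℂ} (hx : x ≠ 0) (h : Vge γ x) :
    γ ≤ x.order := by
  by_contra hlt
  exact hx (HahnSeries.coeff_order_eq_zero.1 (h _ (lt_of_not_ge hlt)))

theorem vge_single {γ : ℚ} (c : ℂ) : Vge γ (HahnSeries.single γ c) := fun q hq =>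
  HahnSeries.coeff_single_of_ne (ne_of_lt hq)

end LCF

namespace LCF

open LeviCivitaField Polynomial

theorem leftFinite_isPWO {A : Set ℚ} (h : LeftFinite A) : A.IsPWO := by
  refine Set.IsWF.isPWO ?_
  rw [Set.isWF_iff_no_descending_seq]
  intro f hf hmem
  have hsub : Set.range f ⊆ {q ∈ A | q < f 0 + 1} := by
    rintro q ⟨n, rfl⟩
    refine ⟨hmem n, ?_⟩
    have := hf.antitone (Nat.zero_le n)
    linarith
  exact (Set.infinite_range_of_injective hf.injective) ((h (f 0 + 1)).subset hsub)

/-- The subring of at most finite Levi-Civita series, as a subring of Hahn series. -/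
def O : Subring (HahnSeries ℚ ℂ) where
  carrier := {x | x ∈ LeviCivitaField ℂ ∧ Vge 0 x}
  zero_mem' := ⟨(LeviCivitaField ℂ).zero_mem, Vge.zero 0⟩
  one_mem' := ⟨(LeviCivitaField ℂ).one_mem, fun q hq => by
    rw [HahnSeries.coeff_one, if_neg (ne_of_lt hq)]⟩
  add_mem' := fun hx hy => ⟨(LeviCivitaField ℂ).add_mem hx.1 hy.1, hx.2.add hy.2⟩
  neg_mem' := fun hx => ⟨(LeviCivitaField ℂ).neg_mem hx.1, hx.2.neg⟩
  mul_mem' := fun hx hy => ⟨(LeviCivitaField ℂ).mul_mem hx.1 hy.1, by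
    have := hx.2.mul hy.2; rwa [zero_add] at this⟩

theorem O_le : O ≤ LeviCivitaField ℂ := fun _ hx => hx.1

theorem vge_coe (x : O) : Vge 0 (x : HahnSeries ℚ ℂ) := x.2.2

/-- The residue homomorphism `x ↦ x[0]`. -/
def ρ : O →+* ℂ where
  toFun x := (x : HahnSeries ℚ ℂ).coeff 0
  map_one' := by
    show ((1 : O) : HahnSeries ℚ ℂ).coeff 0 = 1
    rw [OneMemClass.coe_one, HahnSeries.coeff_one, if_pos rfl]
  map_mul' x y := by
    have h := Vge.mul_coeff (vge_coe x) (vge_coe y)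
    rw [zero_add] at h
    show ((x * y : O) : HahnSeries ℚ ℂ).coeff 0 = _
    rw [MulMemClass.coe_mul]
    exact h
  map_zero' := rfl
  map_add' x y := by
    show ((x + y : O) : HahnSeries ℚ ℂ).coeff 0 = _
    rw [AddMemClass.coe_add, HahnSeries.coeff_add]

theorem ρ_apply (x : O) : ρ x = (x : HahnSeries ℚ ℂ).coeff 0 := rfl

theorem C_mem_O (c : ℂ) : (HahnSeries.C c : HahnSeries ℚ ℂ) ∈ O := by
  constructor
  · exact Set.Finite.leftFinite
      ((Set.finite_singleton (0 : ℚ)).subset HahnSeries.support_single_subset)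
  · exact vge_single c

/-- The embedding of the complex numbers. -/
def ι : ℂ →+* O := (HahnSeries.C : ℂ →+* HahnSeries ℚ ℂ).codRestrict O C_mem_O

theorem ι_coe (c : ℂ) : ((ι c : O) : HahnSeries ℚ ℂ) = HahnSeries.single 0 c := rfl

theorem ρ_ι (c : ℂ) : ρ (ι c) = c := by
  rw [ρ_apply, ι_coe, HahnSeries.coeff_single_same]

theorem vge_natCast_mul {n : ℕ} {γ : ℚ} {x : HahnSeries ℚ ℂ} (h : Vge γ x) :
    Vge ((n : ℚ) * γ) (x ^ n) ∧ (x ^ n).coeff ((n : ℚ) * γ) = (x.coeff γ) ^ n := by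
  induction n with
  | zero =>
      constructor
      · intro q hq
        push_cast at hq
        rw [pow_zero, HahnSeries.coeff_one, if_neg (by nlinarith)]
      · simp [HahnSeries.coeff_one]
  | succ n ih =>
      have hv : Vge ((n : ℚ) * γ + γ) (x ^ n * x) := ih.1.mul h
      have hc := Vge.mul_coeff ih.1 h
      have hcast : ((n + 1 : ℕ) : ℚ) * γ = (n : ℚ) * γ + γ := by push_cast; ring
      constructor
      · rw [pow_succ, hcast]; exact hv
      · rw [pow_succ, hcast, hc, ih.2, pow_succ]

/-- `O` is "integrally closed": any root of a monic polynomial over `O` is at most finite. -/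
theorem vge_zero_of_monic_root {P : Polynomial O} (hP : P.Monic) {ν : HahnSeries ℚ ℂ}
    (hlf : ν ∈ LeviCivitaField ℂ) (hν : Polynomial.eval₂ O.subtype ν P = 0) : Vge 0 ν := by
  by_contra hnot
  have hne : ν ≠ 0 := by
    rintro rfl; exact hnot (Vge.zero 0)
  have horder : ν.order < 0 := by
    rcases not_forall.1 hnot with ⟨q, hq⟩
    rcases _root_.not_imp.1 hq with ⟨hq0, hqc⟩
    calc ν.order ≤ q := HahnSeries.order_le_of_coeff_ne_zero hqc
    _ < 0 := hq0
  set lam := ν.order with hlam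
  set m := P.natDegree with hm
  have hm0 : m ≠ 0 := by
    intro h0
    rw [Polynomial.Monic.natDegree_eq_zero hP] at h0
    rw [h0] at hν
    simp at hν
  have hev : ∑ j ∈ Finset.range (m + 1), O.subtype (P.coeff j) * ν ^ j = 0 := by
    rw [← Polynomial.eval₂_eq_sum_range] at *
    exact hν
  -- take the coefficient at m • lam
  have hcoeff := congrArg (fun z : HahnSeries ℚ ℂ => z.coeff ((m : ℚ) * lam)) hev
  simp only [HahnSeries.coeff_zero] at hcoeff
  rw [← HahnSeries.coeff.addMonoidHom_apply, map_sum] at hcoeff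
  have hterm : ∀ j ∈ Finset.range (m + 1),
      (HahnSeries.coeff.addMonoidHom ((m : ℚ) * lam)) (O.subtype (P.coeff j) * ν ^ j)
        = if j = m then (ν.coeff lam) ^ m else 0 := by
    intro j hj
    rw [Finset.mem_range, Nat.lt_succ_iff] at hj
    rcases eq_or_lt_of_le hj with rfl | hjm
    · rw [if_pos rfl]
      have h1 : (P.coeff m) = 1 := hP.coeff_natDegree
      rw [h1]
      simp only [map_one, one_mul]
      exact (vge_natCast_mul vge_order).2
    · rw [if_neg (ne_of_lt hjm)]
      have hv : Vge (0 + (j : ℚ) * lam) (O.subtype (P.coeff j) * ν ^ j) :=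
        Vge.mul (vge_coe _) (vge_natCast_mul vge_order).1
      refine hv _ ?_
      rw [zero_add]
      have : ((m : ℚ) - j) * lam < 0 := by
        apply mul_neg_of_pos_of_neg _ horder
        have : (j : ℚ) < m := by exact_mod_cast hjm
        linarith
      nlinarith
  rw [Finset.sum_congr rfl hterm, Finset.sum_ite_eq' _ m, if_pos (Finset.self_mem_range_succ m)]
    at hcoeff
  exact pow_ne_zero m (fun h => hne (HahnSeries.coeff_order_eq_zero.1 h)) hcoeff

end LCF

namespace LCF

open LeviCivitaField Polynomial

/-- `n`-fold sumsets. -/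
def iterSum (T : Set ℚ) : ℕ → Set ℚ
  | 0 => {0}
  | n + 1 => T + iterSum T n

theorem leftFinite_iterSum {T : Set ℚ} (hT : LeftFinite T) :
    ∀ n, LeftFinite (iterSum T n)
  | 0 => Set.Finite.leftFinite (Set.finite_singleton 0)
  | n + 1 => hT.addSet (leftFinite_iterSum hT n)

theorem iterSum_lb {T : Set ℚ} {t₁ : ℚ} (hlb : ∀ t ∈ T, t₁ ≤ t) :
    ∀ n, ∀ x ∈ iterSum T n, (n : ℚ) * t₁ ≤ x := by
  intro n
  induction n with
  | zero => intro x hx; rw [Set.mem_singleton_iff.1 hx]; simp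
  | succ n ih =>
      rintro x ⟨t, ht, y, hy, rfl⟩
      have h1 := hlb t ht
      have h2 := ih y hy
      push_cast
      linarith

theorem add_mem_iterSum {T : Set ℚ} :
    ∀ n m : ℕ, ∀ x ∈ iterSum T n, ∀ y ∈ iterSum T m, x + y ∈ iterSum T (n + m) := by
  intro n
  induction n with
  | zero =>
      intro m x hx y hy
      simpa [Set.mem_singleton_iff.1 hx] using hy
  | succ n ih =>
      intro m x hx y hy
      rw [show n + 1 + m = (n + m) + 1 from by omega]
      simp only [iterSum, Set.mem_add] at hx ⊢
      obtain ⟨t, ht, x', hx', rfl⟩ := hx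
      exact ⟨t, ht, x' + y, ih m x' hx' y hy, by ring⟩

theorem mem_iterSum_of_mem_closure {T : Set ℚ} {x : ℚ}
    (hx : x ∈ AddSubmonoid.closure T) : ∃ n, x ∈ iterSum T n := by
  induction hx using AddSubmonoid.closure_induction with
  | mem t ht =>
      refine ⟨1, ?_⟩
      simp only [iterSum, Set.mem_add]
      exact ⟨t, ht, 0, rfl, add_zero t⟩
  | zero => exact ⟨0, rfl⟩
  | add a b _ _ iha ihb =>
      obtain ⟨n, hn⟩ := iha
      obtain ⟨m, hm⟩ := ihb
      exact ⟨n + m, add_mem_iterSum n m a hn b hm⟩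

theorem leftFinite_closure {T : Set ℚ} (hT : LeftFinite T) (hT0 : ∀ t ∈ T, 0 ≤ t) :
    LeftFinite ((AddSubmonoid.closure T : AddSubmonoid ℚ) : Set ℚ) := by
  set T' := T \ {0} with hT'
  have hclos : AddSubmonoid.closure T = AddSubmonoid.closure T' := by
    apply le_antisymm
    · rw [AddSubmonoid.closure_le]
      intro t ht
      by_cases h0 : t = 0
      · rw [h0]; exact AddSubmonoid.zero_mem _
      · exact AddSubmonoid.subset_closure ⟨ht, h0⟩
    · rw [AddSubmonoid.closure_le]
      exact fun t ht => AddSubmonoid.subset_closure ht.1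
  rw [hclos]
  have hT' : LeftFinite T' := hT.mono Set.diff_subset
  by_cases hne : T'.Nonempty
  · obtain ⟨s, hs⟩ := hne
    have hfin : {q ∈ T' | q < s + 1}.Finite := hT' (s + 1)
    have hsmem : s ∈ hfin.toFinset := by
      rw [Set.Finite.mem_toFinset]; exact ⟨hs, by linarith⟩
    set t₁ := hfin.toFinset.min' ⟨s, hsmem⟩ with ht₁
    have ht₁mem : t₁ ∈ hfin.toFinset := Finset.min'_mem _ _
    rw [Set.Finite.mem_toFinset] at ht₁mem
    have ht₁pos : 0 < t₁ := by
      rcases lt_or_eq_of_le (hT0 t₁ ht₁mem.1.1) with h | h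
      · exact h
      · exact absurd h.symm ht₁mem.1.2
    have hlb : ∀ t ∈ T', t₁ ≤ t := by
      intro t ht
      by_cases hlt : t < s + 1
      · exact Finset.min'_le _ _ (by rw [Set.Finite.mem_toFinset]; exact ⟨ht, hlt⟩)
      · push_neg at hlt
        have : t₁ ≤ s := Finset.min'_le _ _ hsmem
        linarith
    intro r
    obtain ⟨N, hN⟩ := exists_nat_ge (r / t₁)
    have hNr : r ≤ (N : ℚ) * t₁ := by
      rw [div_le_iff₀ ht₁pos] at hN
      linarith
    have hsub : {q ∈ ((AddSubmonoid.closure T' : AddSubmonoid ℚ) : Set ℚ) | q < r} ⊆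
        ⋃ n ∈ Finset.range N, {q ∈ iterSum T' n | q < r} := by
      rintro q ⟨hq, hqr⟩
      obtain ⟨n, hn⟩ := mem_iterSum_of_mem_closure hq
      have hnlb := iterSum_lb hlb n q hn
      have hnN : n < N := by
        by_contra hge
        push_neg at hge
        have : (N : ℚ) ≤ (n : ℚ) := by exact_mod_cast hge
        nlinarith
      exact Set.mem_biUnion (Finset.mem_range.2 hnN) ⟨hn, hqr⟩
    exact Set.Finite.subset (Set.Finite.biUnion (Finset.range N).finite_toSet
      fun n _ => leftFinite_iterSum hT' n r) hsub
  · rw [Set.not_nonempty_iff_eq_empty] at hne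
    rw [hne, AddSubmonoid.closure_empty]
    intro r
    apply Set.Finite.subset (Set.finite_singleton (0 : ℚ))
    rintro q ⟨hq, _⟩
    exact hq

/-- The subring of Hahn series with support inside a submonoid. -/
def SOS (M : AddSubmonoid ℚ) : Subring (HahnSeries ℚ ℂ) where
  carrier := {x | ∀ q, x.coeff q ≠ 0 → q ∈ M}
  zero_mem' := fun q hq => absurd rfl hq
  one_mem' := fun q hq => by
    by_cases h : q = 0
    · rw [h]; exact M.zero_mem
    · rw [HahnSeries.coeff_one, if_neg h] at hq; exact absurd rfl hq
  add_mem' := fun {x y} hx hy q hq => by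
    rw [HahnSeries.coeff_add] at hq
    by_cases h : x.coeff q = 0
    · exact hy q (by intro h'; rw [h, h', add_zero] at hq; exact hq rfl)
    · exact hx q h
  neg_mem' := fun {x} hx q hq => hx q (by rwa [HahnSeries.coeff_neg, neg_ne_zero] at hq)
  mul_mem' := fun {x y} hx hy q hq => by
    have := HahnSeries.support_mul_subset (x := x) (y := y) hq
    obtain ⟨a, ha, b, hb, rfl⟩ := this
    exact M.add_mem (hx a ha) (hy b hb)

theorem archimedean_vge {δ : ℚ} (hδ : 0 < δ) {z : HahnSeries ℚ ℂ}
    (h : ∀ i : ℕ, Vge (((i : ℚ) + 1) * δ) z) : z = 0 := by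
  apply eq_zero_of_forall_vge
  intro γ
  obtain ⟨i, hi⟩ := exists_nat_ge (γ / δ)
  refine Vge.mono ?_ (h i)
  rw [div_le_iff₀ hδ] at hi
  nlinarith

/-- Existence of limits of `v`-Cauchy sequences with supports in a fixed left-finite monoid. -/
theorem exists_limit {M : AddSubmonoid ℚ} (hM : LeftFinite (M : Set ℚ)) {δ : ℚ} (hδ : 0 < δ)
    (x : ℕ → HahnSeries ℚ ℂ) (hsupp : ∀ i, x i ∈ SOS M)
    (hcauchy : ∀ i : ℕ, Vge (((i : ℚ) + 1) * δ) (x (i + 1) - x i)) :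
    ∃ L : HahnSeries ℚ ℂ, L ∈ SOS M ∧ ∀ i : ℕ, Vge (((i : ℚ) + 1) * δ) (L - x i) := by
  have stab : ∀ i j : ℕ, i ≤ j → ∀ q, q < ((i : ℚ) + 1) * δ → (x j).coeff q = (x i).coeff q := by
    intro i j hij
    induction j, hij using Nat.le_induction with
    | base => intro q _; rfl
    | succ j hij ih =>
        intro q hq
        have h1 : (x (j + 1) - x j).coeff q = 0 := by
          refine hcauchy j q (lt_of_lt_of_le hq ?_)
          have : (i : ℚ) ≤ j := by exact_mod_cast hij
          nlinarith
        rw [HahnSeries.coeff_sub] at h1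
        have := sub_eq_zero.1 h1
        rw [this, ih q hq]
  -- index function
  set N : ℚ → ℕ := fun q => (⌈q / δ⌉).toNat with hN
  have hNspec : ∀ q : ℚ, q < ((N q : ℚ) + 1) * δ := by
    intro q
    have h1 : (⌈q / δ⌉ : ℚ) ≥ q / δ := Int.le_ceil _
    have h2 : ((⌈q / δ⌉).toNat : ℚ) ≥ (⌈q / δ⌉ : ℚ) := by
      exact_mod_cast Int.self_le_toNat _
    have : q / δ ≤ ((N q : ℚ)) := le_trans h1 h2
    rw [div_le_iff₀ hδ] at this
    nlinarith
  refine ⟨{ coeff := fun q => (x (N q)).coeff q,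
            isPWO_support' := ?_ }, ?_, ?_⟩
  · apply Set.IsPWO.mono (leftFinite_isPWO hM)
    intro q hq
    exact hsupp (N q) q hq
  · intro q hq
    exact hsupp (N q) q hq
  · intro i q hq
    show (_ - x i).coeff q = 0
    rw [HahnSeries.coeff_sub]
    have hcoeff : (x (N q)).coeff q = (x i).coeff q := by
      rcases le_total i (N q) with h | h
      · exact stab i (N q) h q hq
      · exact (stab (N q) i h q (hNspec q)).symm
    show (x (N q)).coeff q - (x i).coeff q = 0
    rw [hcoeff, sub_self]

end LCF

namespace LCF

open LeviCivitaField Polynomial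

variable {M : AddSubmonoid ℚ}

set_option synthInstance.maxHeartbeats 1000000
set_option maxHeartbeats 1600000

instance : CommRing (SOS M) := inferInstance

instance : CommRing O := inferInstance

instance : Nontrivial (SOS M) :=
  ⟨⟨0, 1, fun h => zero_ne_one (α := HahnSeries ℚ ℂ) (congrArg Subtype.val h)⟩⟩

theorem Vge.finsetSum {γ : ℚ} {α : Type*} {s : Finset α} {f : α → HahnSeries ℚ ℂ}
    (h : ∀ i ∈ s, Vge γ (f i)) : Vge γ (∑ i ∈ s, f i) := by
  classical
  induction s using Finset.induction with
  | empty => simpa using Vge.zero γ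
  | insert _ _ hni ih =>
      rw [Finset.sum_insert hni]
      exact (h _ (Finset.mem_insert_self _ _)).add
        (ih fun i hi => h i (Finset.mem_insert_of_mem hi))

theorem vge0_of_mem_SOS (hM0 : ∀ q ∈ M, (0 : ℚ) ≤ q) (x : SOS M) :
    Vge 0 (x : HahnSeries ℚ ℂ) := by
  intro q hq
  by_contra hne
  exact absurd (hM0 q (x.2 q hne)) (not_le.2 hq)

/-- All coefficients of a polynomial have valuation at least `s`. -/
def Dge (s : ℚ) (p : Polynomial (SOS M)) : Prop :=
  ∀ j, Vge s ((p.coeff j : HahnSeries ℚ ℂ))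

theorem Dge.mono {a b : ℚ} (hab : a ≤ b) {p : Polynomial (SOS M)} (h : Dge b p) : Dge a p :=
  fun j => (h j).mono hab

theorem Dge.zero (s : ℚ) : Dge s (0 : Polynomial (SOS M)) := fun j => by
  rw [Polynomial.coeff_zero]
  exact Vge.zero s

theorem Dge.add {s : ℚ} {p q : Polynomial (SOS M)} (hp : Dge s p) (hq : Dge s q) :
    Dge s (p + q) := fun j => by
  rw [Polynomial.coeff_add, AddMemClass.coe_add]
  exact (hp j).add (hq j)

theorem Dge.neg {s : ℚ} {p : Polynomial (SOS M)} (hp : Dge s p) : Dge s (-p) := fun j => by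
  rw [Polynomial.coeff_neg, NegMemClass.coe_neg]
  exact (hp j).neg

theorem Dge.sub {s : ℚ} {p q : Polynomial (SOS M)} (hp : Dge s p) (hq : Dge s q) :
    Dge s (p - q) := by
  rw [sub_eq_add_neg]; exact hp.add hq.neg

theorem Dge.mul {a b : ℚ} {p q : Polynomial (SOS M)} (hp : Dge a p) (hq : Dge b q) :
    Dge (a + b) (p * q) := by
  intro j
  rw [Polynomial.coeff_mul]
  rw [AddSubmonoidClass.coe_finset_sum]
  refine Vge.finsetSum fun ij _ => ?_
  rw [MulMemClass.coe_mul]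
  exact (hp ij.1).mul (hq ij.2)

theorem Dge_of_SOS (hM0 : ∀ q ∈ M, (0 : ℚ) ≤ q) (p : Polynomial (SOS M)) : Dge 0 p :=
  fun j => vge0_of_mem_SOS hM0 _

theorem Dge.mul0 (hM0 : ∀ q ∈ M, (0 : ℚ) ≤ q) {a : ℚ} {p q : Polynomial (SOS M)}
    (hp : Dge a p) : Dge a (p * q) := by
  have := hp.mul (Dge_of_SOS hM0 q)
  rwa [add_zero] at this

theorem Dge.mul0' (hM0 : ∀ q ∈ M, (0 : ℚ) ≤ q) {a : ℚ} {p q : Polynomial (SOS M)}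
    (hq : Dge a q) : Dge a (p * q) := by
  have := (Dge_of_SOS hM0 p).mul hq
  rwa [zero_add] at this

/-- The ideal of elements of valuation at least `s`. -/
def Jideal (hM0 : ∀ q ∈ M, (0 : ℚ) ≤ q) (s : ℚ) : Ideal (SOS M) where
  carrier := {x | Vge s (x : HahnSeries ℚ ℂ)}
  zero_mem' := Vge.zero s
  add_mem' := fun {x y} hx hy => by
    rw [Set.mem_setOf_eq, AddMemClass.coe_add]; exact Vge.add hx hy
  smul_mem' := fun c x hx => by
    have := (vge0_of_mem_SOS hM0 c).mul hx
    rw [zero_add] at this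
    rw [Set.mem_setOf_eq, smul_eq_mul, MulMemClass.coe_mul]
    exact this

theorem dge_iff_map_eq_zero (hM0 : ∀ q ∈ M, (0 : ℚ) ≤ q) {s : ℚ} {p : Polynomial (SOS M)} :
    Dge s p ↔ p.map (Ideal.Quotient.mk (Jideal hM0 s)) = 0 := by
  constructor
  · intro h
    ext j
    rw [Polynomial.coeff_map, Polynomial.coeff_zero, Ideal.Quotient.eq_zero_iff_mem]
    exact h j
  · intro h j
    have := congrArg (fun z => Polynomial.coeff z j) h
    simp only [Polynomial.coeff_map, Polynomial.coeff_zero] at this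
    rwa [Ideal.Quotient.eq_zero_iff_mem] at this

theorem Dge.modByMonic (hM0 : ∀ q ∈ M, (0 : ℚ) ≤ q) {s : ℚ} {p g : Polynomial (SOS M)}
    (hg : g.Monic) (hp : Dge s p) : Dge s (p %ₘ g) := by
  rw [dge_iff_map_eq_zero hM0] at hp ⊢
  rw [Polynomial.map_modByMonic _ hg, hp, Polynomial.zero_modByMonic]

theorem Dge.divByMonic (hM0 : ∀ q ∈ M, (0 : ℚ) ≤ q) {s : ℚ} {p g : Polynomial (SOS M)}
    (hg : g.Monic) (hp : Dge s p) : Dge s (p /ₘ g) := by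
  rw [dge_iff_map_eq_zero hM0] at hp ⊢
  rw [Polynomial.map_divByMonic _ hg, hp, Polynomial.zero_divByMonic]

theorem coeff_sum_C_mul_X_pow {A : Type*} [Semiring A] (c : ℕ → A) (d j : ℕ) :
    (∑ i ∈ Finset.range (d + 1), Polynomial.C (c i) * Polynomial.X ^ i).coeff j
      = if j ≤ d then c j else 0 := by
  rw [Polynomial.finset_sum_coeff]
  have : ∀ i ∈ Finset.range (d + 1),
      (Polynomial.C (c i) * Polynomial.X ^ i).coeff j = if i = j then c i else 0 := by
    intro i _
    rw [Polynomial.coeff_C_mul, Polynomial.coeff_X_pow]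
    by_cases h : j = i
    · rw [if_pos h, if_pos h.symm, mul_one]
    · rw [if_neg h, if_neg (Ne.symm h), mul_zero]
  rw [Finset.sum_congr rfl this, Finset.sum_ite_eq' (Finset.range (d + 1)) j c]
  by_cases h : j ≤ d
  · rw [if_pos (Finset.mem_range.2 (by omega)), if_pos h]
  · rw [if_neg (by simp; omega), if_neg h]

end LCF

namespace LCF

open LeviCivitaField Polynomial

variable {M : AddSubmonoid ℚ}

set_option synthInstance.maxHeartbeats 1000000
set_option maxHeartbeats 3000000

/-- The Hensel iteration. -/
def henselSeq (f g₀ h₀ u w : Polynomial (SOS M)) : ℕ → Polynomial (SOS M) × Polynomial (SOS M)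
  | 0 => (g₀, h₀)
  | i + 1 =>
      let p := henselSeq f g₀ h₀ u w i
      (p.1 + (w * (f - p.1 * p.2)) %ₘ g₀,
       p.2 + ((f - p.1 * p.2) * u + ((w * (f - p.1 * p.2)) /ₘ g₀) * h₀))

theorem hensel (hM : LeftFinite (M : Set ℚ)) (hM0 : ∀ q ∈ M, (0 : ℚ) ≤ q)
    {m k : ℕ} (hk : 0 < k) (hkm : k < m)
    (f g₀ h₀ u w : Polynomial (SOS M))
    (hf : f.Monic) (hfd : f.natDegree = m)
    (hg₀ : g₀.Monic) (hg₀d : g₀.natDegree = k)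
    (hh₀ : h₀.Monic) (hh₀d : h₀.natDegree = m - k)
    (hbez : u * g₀ + w * h₀ = 1)
    {δ : ℚ} (hδ : 0 < δ) (hsmall : Dge δ (f - g₀ * h₀)) :
    ∃ G H : Polynomial (SOS M), G.Monic ∧ G.natDegree = k ∧ f = G * H ∧ Dge δ (G - g₀) := by
  classical
  set T := henselSeq f g₀ h₀ u w with hT
  have hTsucc : ∀ i, T (i + 1) =
      ((T i).1 + (w * (f - (T i).1 * (T i).2)) %ₘ g₀,
       (T i).2 + ((f - (T i).1 * (T i).2) * u + ((w * (f - (T i).1 * (T i).2)) /ₘ g₀) * h₀)) :=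
    fun i => rfl
  set e : ℕ → Polynomial (SOS M) := fun i => f - (T i).1 * (T i).2 with he
  set dg : ℕ → Polynomial (SOS M) := fun i => (w * e i) %ₘ g₀ with hdg
  set dh : ℕ → Polynomial (SOS M) := fun i => (e i) * u + ((w * e i) /ₘ g₀) * h₀ with hdh
  have hg₀deg : g₀.degree = (k : WithBot ℕ) := by
    rw [Polynomial.degree_eq_natDegree hg₀.ne_zero, hg₀d]
  have hkey : ∀ i, dg i * h₀ + dh i * g₀ = e i := by
    intro i
    have hdiv := Polynomial.modByMonic_add_div (w * e i) g₀
    simp only [hdg, hdh]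
    linear_combination h₀ * hdiv + (e i) * hbez
  -- main invariant
  have hInv : ∀ i : ℕ, (T i).1.Monic ∧ (T i).1.natDegree = k ∧
      (T i).2.Monic ∧ (T i).2.natDegree = m - k ∧
      Dge δ ((T i).1 - g₀) ∧ Dge δ ((T i).2 - h₀) ∧ Dge (((i : ℚ) + 1) * δ) (e i) := by
    intro i
    induction i with
    | zero =>
        refine ⟨hg₀, hg₀d, hh₀, hh₀d, ?_, ?_, ?_⟩
        · have h0 : (T 0).1 - g₀ = 0 := by
            rw [show (T 0).1 = g₀ from rfl, sub_self]
          rw [h0]; exact Dge.zero δ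
        · have h0 : (T 0).2 - h₀ = 0 := by
            rw [show (T 0).2 = h₀ from rfl, sub_self]
          rw [h0]; exact Dge.zero δ
        · refine (hsmall.mono ?_)
          push_cast; nlinarith
    | succ i ih =>
        obtain ⟨hgm, hgd, hhm, hhd, hgg₀, hhh₀, hei⟩ := ih
        have hgdeg : (T i).1.degree = (k : WithBot ℕ) := by
          rw [Polynomial.degree_eq_natDegree hgm.ne_zero, hgd]
        have hhdeg : (T i).2.degree = ((m - k : ℕ) : WithBot ℕ) := by
          rw [Polynomial.degree_eq_natDegree hhm.ne_zero, hhd]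
        have hedeg : (e i).degree < (m : WithBot ℕ) := by
          have hmul : ((T i).1 * (T i).2).Monic := hgm.mul hhm
          have hmuld : ((T i).1 * (T i).2).natDegree = m := by
            rw [hgm.natDegree_mul hhm, hgd, hhd]
            omega
          have := Polynomial.degree_sub_lt
            (p := f) (q := (T i).1 * (T i).2) ?_ hf.ne_zero ?_
          · rw [Polynomial.degree_eq_natDegree hf.ne_zero, hfd] at this
            exact this
          · rw [Polynomial.degree_eq_natDegree hf.ne_zero,
              Polynomial.degree_eq_natDegree hmul.ne_zero, hfd, hmuld]
          · rw [hf.leadingCoeff, hmul.leadingCoeff]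
        have hdgdeg : (dg i).degree < (k : WithBot ℕ) := by
          rw [← hg₀deg]
          exact Polynomial.degree_modByMonic_lt _ hg₀
        have hDdg : Dge (((i : ℚ) + 1) * δ) (dg i) :=
          (hei.mul0' hM0 (p := w)).modByMonic hM0 hg₀
        have hDqq : Dge (((i : ℚ) + 1) * δ) ((w * e i) /ₘ g₀) :=
          (hei.mul0' hM0 (p := w)).divByMonic hM0 hg₀
        have hDdh : Dge (((i : ℚ) + 1) * δ) (dh i) :=
          (hei.mul0 hM0).add (hDqq.mul0 hM0)
        -- degree bound for dh
        have hdhdeg : (dh i).degree < ((m - k : ℕ) : WithBot ℕ) := by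
          by_cases hdh0 : dh i = 0
          · rw [hdh0, Polynomial.degree_zero]
            exact WithBot.bot_lt_coe _
          · have h1 : dh i * g₀ = e i - dg i * h₀ := by
              have := hkey i; linear_combination this
            have h2 : (dg i * h₀).degree < (m : WithBot ℕ) := by
              rcases eq_or_ne (dg i) 0 with h | h
              · rw [h, zero_mul, Polynomial.degree_zero]
                exact WithBot.bot_lt_coe _
              · rw [hh₀.degree_mul]
                rw [Polynomial.degree_eq_natDegree hh₀.ne_zero, hh₀d]
                calc (dg i).degree + ((m - k : ℕ) : WithBot ℕ)
                    < (k : WithBot ℕ) + ((m - k : ℕ) : WithBot ℕ) := by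
                      exact WithBot.add_lt_add_right (by exact WithBot.coe_ne_bot) hdgdeg
                  _ = (m : WithBot ℕ) := by
                      rw [← Nat.cast_add]
                      norm_cast
                      omega
            have h3 : (dh i * g₀).degree < (m : WithBot ℕ) := by
              rw [h1]
              exact lt_of_le_of_lt (Polynomial.degree_sub_le _ _) (max_lt hedeg h2)
            rw [hg₀.degree_mul, Polynomial.degree_eq_natDegree hdh0, hg₀deg,
              ← Nat.cast_add, Nat.cast_lt] at h3
            have h5 : (dh i).natDegree < m - k := by omega
            exact (Polynomial.natDegree_lt_iff_degree_lt hdh0).1 h5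
        have hg' : (T (i + 1)).1 = (T i).1 + dg i := by rw [hTsucc]
        have hh' : (T (i + 1)).2 = (T i).2 + dh i := by rw [hTsucc]
        have hdgltg : (dg i).degree < (T i).1.degree := by rw [hgdeg]; exact hdgdeg
        have hdhlth : (dh i).degree < (T i).2.degree := by rw [hhdeg]; exact hdhdeg
        have hg'm : (T (i + 1)).1.Monic := by rw [hg']; exact hgm.add_of_left hdgltg
        have hh'm : (T (i + 1)).2.Monic := by rw [hh']; exact hhm.add_of_left hdhlth
        have hg'd : (T (i + 1)).1.natDegree = k := by
          rw [hg']
          have := Polynomial.degree_add_eq_left_of_degree_lt hdgltg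
          rw [hgdeg] at this
          exact Polynomial.natDegree_eq_of_degree_eq_some this
        have hh'd : (T (i + 1)).2.natDegree = m - k := by
          rw [hh']
          have := Polynomial.degree_add_eq_left_of_degree_lt hdhlth
          rw [hhdeg] at this
          exact Polynomial.natDegree_eq_of_degree_eq_some this
        have hδle : δ ≤ ((i : ℚ) + 1) * δ := by nlinarith [Nat.cast_nonneg (α := ℚ) i]
        have hg'g₀ : Dge δ ((T (i + 1)).1 - g₀) := by
          rw [hg', show (T i).1 + dg i - g₀ = ((T i).1 - g₀) + dg i from by ring]
          exact hgg₀.add (hDdg.mono hδle)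
        have hh'h₀ : Dge δ ((T (i + 1)).2 - h₀) := by
          rw [hh', show (T i).2 + dh i - h₀ = ((T i).2 - h₀) + dh i from by ring]
          exact hhh₀.add (hDdh.mono hδle)
        have he' : e (i + 1) =
            -(dg i * ((T i).2 - h₀) + dh i * ((T i).1 - g₀) + dg i * dh i) := by
          simp only [he, hg', hh']
          linear_combination -hkey i
        have hDe' : Dge (((i : ℚ) + 1 + 1) * δ) (e (i + 1)) := by
          rw [he']
          have t1 : Dge (((i : ℚ) + 1) * δ + δ) (dg i * ((T i).2 - h₀)) := hDdg.mul hhh₀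
          have t2 : Dge (((i : ℚ) + 1) * δ + δ) (dh i * ((T i).1 - g₀)) := hDdh.mul hgg₀
          have t3 : Dge (((i : ℚ) + 1) * δ + ((i : ℚ) + 1) * δ) (dg i * dh i) := hDdg.mul hDdh
          have hle : ((i : ℚ) + 1 + 1) * δ ≤ ((i : ℚ) + 1) * δ + δ := by nlinarith
          have hle3 : ((i : ℚ) + 1 + 1) * δ ≤ ((i : ℚ) + 1) * δ + ((i : ℚ) + 1) * δ := by
            nlinarith [Nat.cast_nonneg (α := ℚ) i]
          exact (((t1.mono hle).add (t2.mono hle)).add (t3.mono hle3)).neg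
        have hcast : (((i + 1 : ℕ) : ℚ) + 1) * δ = ((i : ℚ) + 1 + 1) * δ := by push_cast; ring
        exact ⟨hg'm, hg'd, hh'm, hh'd, hg'g₀, hh'h₀, by rw [hcast]; exact hDe'⟩
  -- limits of the coefficients
  have hcau1 : ∀ j : ℕ, ∀ i : ℕ, Vge (((i : ℚ) + 1) * δ)
      ((((T (i + 1)).1.coeff j : SOS M) : HahnSeries ℚ ℂ) - ((T i).1.coeff j : HahnSeries ℚ ℂ)) := by
    intro j i
    have hDdg : Dge (((i : ℚ) + 1) * δ) (dg i) :=
      ((hInv i).2.2.2.2.2.2.mul0' hM0 (p := w)).modByMonic hM0 hg₀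
    have : (T (i + 1)).1 = (T i).1 + dg i := by rw [hTsucc]
    rw [this]
    have hco : ((T i).1 + dg i).coeff j = (T i).1.coeff j + (dg i).coeff j :=
      Polynomial.coeff_add _ _ _
    rw [hco, AddMemClass.coe_add, add_sub_cancel_left]
    exact hDdg j
  have hcau2 : ∀ j : ℕ, ∀ i : ℕ, Vge (((i : ℚ) + 1) * δ)
      ((((T (i + 1)).2.coeff j : SOS M) : HahnSeries ℚ ℂ) - ((T i).2.coeff j : HahnSeries ℚ ℂ)) := by
    intro j i
    have hei := (hInv i).2.2.2.2.2.2
    have hDqq : Dge (((i : ℚ) + 1) * δ) ((w * e i) /ₘ g₀) :=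
      (hei.mul0' hM0 (p := w)).divByMonic hM0 hg₀
    have hDdh : Dge (((i : ℚ) + 1) * δ) (dh i) := (hei.mul0 hM0).add (hDqq.mul0 hM0)
    have : (T (i + 1)).2 = (T i).2 + dh i := by rw [hTsucc]
    rw [this]
    have hco : ((T i).2 + dh i).coeff j = (T i).2.coeff j + (dh i).coeff j :=
      Polynomial.coeff_add _ _ _
    rw [hco, AddMemClass.coe_add, add_sub_cancel_left]
    exact hDdh j
  have hlim1 := fun j : ℕ => exists_limit hM hδ
    (fun i => (((T i).1.coeff j : SOS M) : HahnSeries ℚ ℂ))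
    (fun i => ((T i).1.coeff j).2) (hcau1 j)
  have hlim2 := fun j : ℕ => exists_limit hM hδ
    (fun i => (((T i).2.coeff j : SOS M) : HahnSeries ℚ ℂ))
    (fun i => ((T i).2.coeff j).2) (hcau2 j)
  choose L1 hL1mem hL1 using hlim1
  choose L2 hL2mem hL2 using hlim2
  set G : Polynomial (SOS M) :=
    ∑ j ∈ Finset.range (k + 1), Polynomial.C (⟨L1 j, hL1mem j⟩ : SOS M) * Polynomial.X ^ j with hG
  set H : Polynomial (SOS M) :=
    ∑ j ∈ Finset.range (m - k + 1),
      Polynomial.C (⟨L2 j, hL2mem j⟩ : SOS M) * Polynomial.X ^ j with hH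
  have hGcoeff : ∀ j, G.coeff j = if j ≤ k then (⟨L1 j, hL1mem j⟩ : SOS M) else 0 := fun j =>
    coeff_sum_C_mul_X_pow _ k j
  have hHcoeff : ∀ j, H.coeff j = if j ≤ m - k then (⟨L2 j, hL2mem j⟩ : SOS M) else 0 := fun j =>
    coeff_sum_C_mul_X_pow _ (m - k) j
  -- approximation of G and H by the iterates
  have hGapprox : ∀ i : ℕ, Dge (((i : ℚ) + 1) * δ) (G - (T i).1) := by
    intro i j
    have hco : (G - (T i).1).coeff j = G.coeff j - (T i).1.coeff j :=
      Polynomial.coeff_sub _ _ _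
    rw [hco]
    by_cases hj : j ≤ k
    · rw [hGcoeff j, if_pos hj]
      have h := hL1 j i
      intro q hq
      have h2 := h q hq
      rw [HahnSeries.coeff_sub] at h2
      rw [AddSubgroupClass.coe_sub, HahnSeries.coeff_sub]
      simpa using h2
    · rw [hGcoeff j, if_neg hj]
      have h0 : (T i).1.coeff j = 0 := by
        apply Polynomial.coeff_eq_zero_of_natDegree_lt
        rw [(hInv i).2.1]; omega
      rw [h0, sub_zero]
      intro q hq
      simp
  have hHapprox : ∀ i : ℕ, Dge (((i : ℚ) + 1) * δ) (H - (T i).2) := by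
    intro i j
    have hco : (H - (T i).2).coeff j = H.coeff j - (T i).2.coeff j :=
      Polynomial.coeff_sub _ _ _
    rw [hco]
    by_cases hj : j ≤ m - k
    · rw [hHcoeff j, if_pos hj]
      have h := hL2 j i
      intro q hq
      have h2 := h q hq
      rw [HahnSeries.coeff_sub] at h2
      rw [AddSubgroupClass.coe_sub, HahnSeries.coeff_sub]
      simpa using h2
    · rw [hHcoeff j, if_neg hj]
      have h0 : (T i).2.coeff j = 0 := by
        apply Polynomial.coeff_eq_zero_of_natDegree_lt
        rw [(hInv i).2.2.2.1]; omega
      rw [h0, sub_zero]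
      intro q hq
      simp
  -- G is monic of degree k
  have hGk : G.coeff k = 1 := by
    rw [hGcoeff k, if_pos le_rfl]
    have hone : ∀ i : ℕ, ((T i).1.coeff k : HahnSeries ℚ ℂ) = 1 := by
      intro i
      have h1 : (T i).1.coeff k = 1 := by
        have := (hInv i).1.coeff_natDegree
        rwa [(hInv i).2.1] at this
      rw [h1, OneMemClass.coe_one]
    have : L1 k - 1 = 0 := by
      apply archimedean_vge hδ
      intro i
      have := hL1 k i
      rwa [hone i] at this
    apply Subtype.ext
    show L1 k = ((1 : SOS M) : HahnSeries ℚ ℂ)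
    rw [OneMemClass.coe_one]
    exact sub_eq_zero.1 this
  have hGdegle : G.natDegree ≤ k := by
    rw [Polynomial.natDegree_le_iff_coeff_eq_zero]
    intro N hN
    rw [hGcoeff N, if_neg (by omega)]
  have hGmonic : G.Monic := Polynomial.monic_of_natDegree_le_of_coeff_eq_one k hGdegle hGk
  have hGdeg : G.natDegree = k := by
    refine le_antisymm hGdegle (Polynomial.le_natDegree_of_ne_zero ?_)
    rw [hGk]; exact one_ne_zero
  have hfGH : f = G * H := by
    have hzero : ∀ i : ℕ, Dge (((i : ℚ) + 1) * δ) (f - G * H) := by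
      intro i
      have hrw : f - G * H = e i - (G - (T i).1) * H - (T i).1 * (H - (T i).2) := by
        simp only [he]; ring
      rw [hrw]
      exact ((hInv i).2.2.2.2.2.2.sub ((hGapprox i).mul0 hM0)).sub ((hHapprox i).mul0' hM0)
    have hsub : f - G * H = 0 := by
      apply Polynomial.ext
      intro j
      rw [Polynomial.coeff_zero]
      apply Subtype.ext
      rw [ZeroMemClass.coe_zero]
      exact archimedean_vge hδ (fun i => hzero i j)
    linear_combination hsub
  have hGg₀ : Dge δ (G - g₀) := by
    have h := hGapprox 0
    have h0 : (T 0).1 = g₀ := rfl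
    rw [h0] at h
    refine h.mono ?_
    norm_num
  exact ⟨G, H, hGmonic, hGdeg, hfGH, hGg₀⟩

end LCF

namespace LCF

open LeviCivitaField Polynomial

set_option synthInstance.maxHeartbeats 1000000
set_option maxHeartbeats 3000000

theorem leftFinite_biUnion {α : Type*} (s : Finset α) (f : α → Set ℚ)
    (h : ∀ i ∈ s, LeftFinite (f i)) : LeftFinite (⋃ i ∈ s, f i) := by
  intro r
  have hsub : {q ∈ ⋃ i ∈ s, f i | q < r} ⊆ ⋃ i ∈ s, {q ∈ f i | q < r} := by
    rintro q ⟨hq, hqr⟩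
    rw [Set.mem_iUnion₂] at hq ⊢
    obtain ⟨i, hi, hfi⟩ := hq
    exact ⟨i, hi, hfi, hqr⟩
  exact Set.Finite.subset (Set.Finite.biUnion s.finite_toSet fun i hi => h i hi r) hsub

/-- Members of `O` whose nonzero coefficients lie in a fixed positive rational `δ` or above…
`ordOf x` is the order of `x` viewed in the Hahn series. -/
theorem order_pos_of_res_zero {x : O} (hx : x ≠ 0) (hres : ρ x = 0) :
    0 < ((x : HahnSeries ℚ ℂ)).order := by
  have hne : ((x : HahnSeries ℚ ℂ)) ≠ 0 := fun h => hx (Subtype.ext h)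
  have h0 : (0 : ℚ) ≤ ((x : HahnSeries ℚ ℂ)).order := le_order_of_vge hne x.2.2
  rcases eq_or_lt_of_le h0 with h | h
  · exfalso
    refine hne (HahnSeries.coeff_order_eq_zero.1 ?_)
    rw [← h]
    exact hres
  · exact h

/-- Application of Hensel's lemma over `O`: factor a monic polynomial whose residue splits
into coprime monic factors. -/
theorem hensel_O (F : Polynomial O) (hF : F.Monic) {m k : ℕ} (hFd : F.natDegree = m)
    (hk : 0 < k) (hkm : k < m) (gc hc uc wc : Polynomial ℂ)
    (hgc : gc.Monic) (hgcd : gc.natDegree = k)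
    (hhc : hc.Monic) (hhcd : hc.natDegree = m - k)
    (hbezc : uc * gc + wc * hc = 1)
    (hres : F.map ρ = gc * hc) :
    ∃ G H : Polynomial O, G.Monic ∧ G.natDegree = k ∧ F = G * H ∧ G.map ρ = gc := by
  classical
  -- the monoid generated by the supports of the coefficients of F
  set T₀ : Set ℚ := ⋃ j ∈ Finset.range (m + 1), ((F.coeff j : HahnSeries ℚ ℂ)).support with hT₀
  have hT₀lf : LeftFinite T₀ :=
    leftFinite_biUnion _ _ fun j _ => ((F.coeff j).2.1)
  have hT₀pos : ∀ t ∈ T₀, (0 : ℚ) ≤ t := by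
    intro t ht
    rw [Set.mem_iUnion₂] at ht
    obtain ⟨j, _, hj⟩ := ht
    by_contra hneg
    exact hj ((F.coeff j).2.2 t (not_le.1 hneg))
  set M : AddSubmonoid ℚ := AddSubmonoid.closure T₀ with hM
  have hMlf : LeftFinite (M : Set ℚ) := leftFinite_closure hT₀lf hT₀pos
  have hM0 : ∀ q ∈ M, (0 : ℚ) ≤ q := by
    intro q hq
    induction hq using AddSubmonoid.closure_induction with
    | mem t ht => exact hT₀pos t ht
    | zero => exact le_refl 0
    | add a b _ _ ha hb => exact add_nonneg ha hb
  -- SOS M is contained in O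
  have hle : SOS M ≤ O := by
    intro x hx
    refine ⟨hMlf.mono fun q hq => hx q hq, ?_⟩
    · intro q hq
      by_contra hne
      exact absurd (hM0 q (hx q hne)) (not_le.2 hq)
  set inc : SOS M →+* O := Subring.inclusion hle with hinc
  have hinc_coe : ∀ x : SOS M, ((inc x : O) : HahnSeries ℚ ℂ) = (x : HahnSeries ℚ ℂ) :=
    fun x => rfl
  have hincinj : Function.Injective inc := fun x y h =>
    Subtype.ext (by rw [← hinc_coe x, ← hinc_coe y, h])
  -- the coefficients of F lie in SOS M
  have hFmem : ∀ j, ((F.coeff j : HahnSeries ℚ ℂ)) ∈ SOS M := by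
    intro j q hq
    by_cases hjm : j ≤ m
    · apply AddSubmonoid.subset_closure
      rw [hT₀, Set.mem_iUnion₂]
      exact ⟨j, Finset.mem_range.2 (by omega), hq⟩
    · exfalso
      have : F.coeff j = 0 := Polynomial.coeff_eq_zero_of_natDegree_lt (by omega)
      rw [this] at hq
      exact hq rfl
  set FM : Polynomial (SOS M) :=
    ∑ j ∈ Finset.range (m + 1),
      Polynomial.C (⟨(F.coeff j : HahnSeries ℚ ℂ), hFmem j⟩ : SOS M) * Polynomial.X ^ j with hFM
  have hFMcoeff : ∀ j, ((FM.coeff j : SOS M) : HahnSeries ℚ ℂ) = (F.coeff j : HahnSeries ℚ ℂ) := by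
    intro j
    rw [coeff_sum_C_mul_X_pow]
    by_cases hj : j ≤ m
    · rw [if_pos hj]
    · rw [if_neg hj, Polynomial.coeff_eq_zero_of_natDegree_lt (show F.natDegree < j by omega)]
      rfl
  have hFMmap : FM.map inc = F := by
    apply Polynomial.ext
    intro j
    rw [Polynomial.coeff_map]
    apply Subtype.ext
    rw [hinc_coe, hFMcoeff]
  have hFMm : FM.Monic := by
    apply Polynomial.monic_of_natDegree_le_of_coeff_eq_one m
    · rw [Polynomial.natDegree_le_iff_coeff_eq_zero]
      intro N hN
      apply Subtype.ext
      show ((FM.coeff N : SOS M) : HahnSeries ℚ ℂ) = ((0 : SOS M) : HahnSeries ℚ ℂ)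
      rw [hFMcoeff, Polynomial.coeff_eq_zero_of_natDegree_lt (by omega),
        ZeroMemClass.coe_zero, ZeroMemClass.coe_zero]
    · apply Subtype.ext
      show ((FM.coeff m : SOS M) : HahnSeries ℚ ℂ) = ((1 : SOS M) : HahnSeries ℚ ℂ)
      rw [hFMcoeff, ← hFd, hF.coeff_natDegree, OneMemClass.coe_one, OneMemClass.coe_one]
  have hFMd : FM.natDegree = m := by
    rw [← hFMmap] at hFd
    rwa [hFMm.natDegree_map] at hFd
  -- constant lifts
  set ιM : ℂ →+* SOS M :=
    (HahnSeries.C : ℂ →+* HahnSeries ℚ ℂ).codRestrict (SOS M) (by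
      intro c q hq
      have : q = 0 := by
        by_contra hne
        exact hq (HahnSeries.coeff_single_of_ne hne)
      rw [this]
      exact M.zero_mem) with hιM
  have hρinc_ιM : ∀ c : ℂ, ρ (inc (ιM c)) = c := by
    intro c
    rw [ρ_apply]
    show ((HahnSeries.C c : HahnSeries ℚ ℂ)).coeff 0 = c
    exact HahnSeries.coeff_single_same 0 c
  set gM := gc.map ιM with hgM
  set hM' := hc.map ιM with hhM'
  set uM := uc.map ιM with huM
  set wM := wc.map ιM with hwM
  have hgMm : gM.Monic := hgc.map ιM
  have hhMm : hM'.Monic := hhc.map ιM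
  have hgMd : gM.natDegree = k := by rw [hgM, hgc.natDegree_map, hgcd]
  have hhMd : hM'.natDegree = m - k := by rw [hhM', hhc.natDegree_map, hhcd]
  have hbezM : uM * gM + wM * hM' = 1 := by
    rw [huM, hgM, hwM, hhM', ← Polynomial.map_mul, ← Polynomial.map_mul, ← Polynomial.map_add,
      hbezc, Polynomial.map_one]
  -- residue of the error term is zero
  have hρIM : ∀ p : Polynomial ℂ, (p.map ιM).map (ρ.comp inc) = p := by
    intro p
    rw [Polynomial.map_map]
    have : (ρ.comp inc).comp ιM = RingHom.id ℂ := by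
      ext c
      exact hρinc_ιM c
    rw [this, Polynomial.map_id]
  have hresM : (FM - gM * hM').map (ρ.comp inc) = 0 := by
    rw [Polynomial.map_sub, Polynomial.map_mul, hρIM, hρIM, ← Polynomial.map_map, hFMmap, hres,
      sub_self]
  -- extract δ
  by_cases he0 : FM - gM * hM' = 0
  · -- exact factorization
    refine ⟨gM.map inc, hM'.map inc, hgMm.map inc, ?_, ?_, ?_⟩
    · rw [hgMm.natDegree_map, hgMd]
    · rw [← hFMmap, sub_eq_zero.1 he0, Polynomial.map_mul]
    · rw [Polynomial.map_map, hgM]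
      exact hρIM gc
  · have hsupp_ne : (FM - gM * hM').support.Nonempty := by
      rwa [Polynomial.support_nonempty]
    set E := FM - gM * hM' with hE
    set δ : ℚ := (FM - gM * hM').support.inf' hsupp_ne
      (fun j => ((E.coeff j : SOS M) : HahnSeries ℚ ℂ).order) with hδdef
    have hEresj : ∀ j, ρ (inc (E.coeff j)) = 0 := by
      intro j
      have := congrArg (fun p => Polynomial.coeff p j) hresM
      simpa [Polynomial.coeff_map] using this
    have hδpos : 0 < δ := by
      rw [hδdef]
      rw [Finset.lt_inf'_iff]
      intro j hj
      rw [Polynomial.mem_support_iff] at hj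
      have hne : inc (E.coeff j) ≠ 0 := fun h => hj (hincinj (by rw [h, map_zero]))
      have := order_pos_of_res_zero hne (hEresj j)
      rwa [hinc_coe] at this
    have hsmall : Dge δ E := by
      intro j
      by_cases hj : E.coeff j = 0
      · rw [hj]; intro q hq; simp
      · have hjm : j ∈ E.support := Polynomial.mem_support_iff.2 hj
        have hord : δ ≤ ((E.coeff j : SOS M) : HahnSeries ℚ ℂ).order :=
          Finset.inf'_le _ hjm
        exact vge_order.mono hord
    obtain ⟨G, H, hGm, hGd, hfGH, hGg₀⟩ :=
      hensel hMlf hM0 hk hkm FM gM hM' uM wM hFMm hFMd hgMm hgMd hhMm hhMd hbezM hδpos hsmall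
    refine ⟨G.map inc, H.map inc, hGm.map inc, ?_, ?_, ?_⟩
    · rw [hGm.natDegree_map, hGd]
    · rw [← hFMmap, hfGH, Polynomial.map_mul]
    · -- residue of G is gc
      have hgc' : gc = gM.map (ρ.comp inc) := by rw [hgM]; exact (hρIM gc).symm
      rw [Polynomial.map_map, hgc']
      ext j
      rw [Polynomial.coeff_map, Polynomial.coeff_map]
      have h1 := hGg₀ j 0 hδpos
      rw [show ((G - gM).coeff j : SOS M) = G.coeff j - gM.coeff j from
        Polynomial.coeff_sub _ _ _, AddSubgroupClass.coe_sub, HahnSeries.coeff_sub] at h1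
      have h2 := sub_eq_zero.1 h1
      rw [RingHom.comp_apply, RingHom.comp_apply, ρ_apply, ρ_apply, hinc_coe, hinc_coe]
      exact h2

end LCF

namespace LCF

open LeviCivitaField Polynomial

set_option synthInstance.maxHeartbeats 1000000
set_option maxHeartbeats 3000000

/-- A monic complex polynomial of degree `m ≥ 2` with vanishing subleading coefficient and
some nonzero lower coefficient has a root of multiplicity less than `m`. -/
theorem exists_root_mult_lt {p : Polynomial ℂ} (hm : p.Monic) {m : ℕ} (hd : p.natDegree = m)
    (h2 : 2 ≤ m) (hm1 : p.coeff (m - 1) = 0) {j₀ : ℕ} (hj₀ : j₀ < m)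
    (hcoeff : p.coeff j₀ ≠ 0) :
    ∃ c : ℂ, p.IsRoot c ∧ p.rootMultiplicity c < m := by
  have hdeg : p.degree ≠ 0 := by
    rw [Polynomial.degree_eq_natDegree hm.ne_zero, hd]
    exact_mod_cast by omega
  obtain ⟨c, hc⟩ := Complex.isAlgClosed.exists_root p hdeg
  refine ⟨c, hc, ?_⟩
  by_contra hge
  push_neg at hge
  have hdvd : (X - C c) ^ m ∣ p := by
    have h1 := Polynomial.pow_rootMultiplicity_dvd p c
    exact dvd_trans (pow_dvd_pow _ hge) h1
  have heq : p = (X - C c) ^ m := by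
    obtain ⟨q, hq⟩ := hdvd
    have hqm : ((X - C c) ^ m).Monic := (Polynomial.monic_X_sub_C c).pow m
    have hq0 : q ≠ 0 := fun h0 => hm.ne_zero (by rw [hq, h0, mul_zero])
    have hnd := congrArg Polynomial.natDegree hq
    rw [hd, Polynomial.natDegree_mul (pow_ne_zero _ (Polynomial.X_sub_C_ne_zero c)) hq0,
      Polynomial.natDegree_pow, Polynomial.natDegree_X_sub_C, mul_one] at hnd
    have hdq : q.natDegree = 0 := by omega
    have hqmonic : q.Monic := hqm.of_mul_monic_left (hq ▸ hm)
    rw [hq, hqmonic.natDegree_eq_zero.1 hdq, mul_one]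
  have hc0 : c = 0 := by
    have h1 : p.coeff (m - 1) = -c * (m : ℂ) := by
      rw [heq]
      have hrw : (X - C c) = (X + C (-c)) := by rw [map_neg, sub_eq_add_neg]
      rw [hrw, Polynomial.coeff_X_add_C_pow]
      have h2' : m - (m - 1) = 1 := by omega
      have h3' : m.choose (m - 1) = m := by
        have := Nat.choose_symm (show 1 ≤ m by omega) (n := m)
        rw [this, Nat.choose_one_right]
      rw [h2', pow_one, h3']
    rw [hm1] at h1
    have hm0 : (m : ℂ) ≠ 0 := by exact_mod_cast by omega
    rcases mul_eq_zero.1 h1.symm with h | h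
    · exact neg_eq_zero.1 h
    · exact absurd h hm0
  rw [hc0] at heq
  simp only [map_zero, sub_zero] at heq
  rw [heq, Polynomial.coeff_X_pow, if_neg (by omega)] at hcoeff
  exact hcoeff rfl

end LCF

namespace LCF

open LeviCivitaField Polynomial

set_option synthInstance.maxHeartbeats 1000000
set_option maxHeartbeats 3000000

theorem eq_pow_of_rootMultiplicity_ge {p : Polynomial ℂ} (hm : p.Monic) {m : ℕ}
    (hd : p.natDegree = m) {c : ℂ} (hge : m ≤ p.rootMultiplicity c) : p = (X - C c) ^ m := by
  have hdvd : (X - C c) ^ m ∣ p :=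
    dvd_trans (pow_dvd_pow _ hge) (Polynomial.pow_rootMultiplicity_dvd p c)
  obtain ⟨q, hq⟩ := hdvd
  have hqm : ((X - C c) ^ m).Monic := (Polynomial.monic_X_sub_C c).pow m
  have hq0 : q ≠ 0 := fun h0 => hm.ne_zero (by rw [hq, h0, mul_zero])
  have hnd := congrArg Polynomial.natDegree hq
  rw [hd, Polynomial.natDegree_mul (pow_ne_zero _ (Polynomial.X_sub_C_ne_zero c)) hq0,
    Polynomial.natDegree_pow, Polynomial.natDegree_X_sub_C, mul_one] at hnd
  have hdq : q.natDegree = 0 := by omega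
  have hqmonic : q.Monic := hqm.of_mul_monic_left (hq ▸ hm)
  rw [hq, hqmonic.natDegree_eq_zero.1 hdq, mul_one]

/-- Coefficient `m` of a Taylor shift of a monic polynomial of degree `m`. -/
theorem taylor_coeff_top {A : Type*} [CommRing A] {P : Polynomial A} {m : ℕ} (hP : P.Monic)
    (hPd : P.natDegree = m) (b : A) : (Polynomial.taylor b P).coeff m = 1 := by
  rw [Polynomial.taylor_coeff]
  have hH : Polynomial.hasseDeriv m P = 1 := by
    ext n
    rw [Polynomial.hasseDeriv_coeff, Polynomial.coeff_one]
    cases n with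
    | zero =>
        rw [if_pos rfl, Nat.zero_add, Nat.choose_self, Nat.cast_one, one_mul, ← hPd]
        exact hP.coeff_natDegree
    | succ n =>
        rw [if_neg (by omega), Polynomial.coeff_eq_zero_of_natDegree_lt (by omega), mul_zero]
  rw [hH, Polynomial.eval_one]

/-- Coefficient `m - 1` of a Taylor shift of a monic polynomial of degree `m`. -/
theorem taylor_coeff_subtop {A : Type*} [CommRing A] {P : Polynomial A} {m : ℕ} (hP : P.Monic)
    (hPd : P.natDegree = m) (hm : 1 ≤ m) (b : A) :
    (Polynomial.taylor b P).coeff (m - 1) = P.coeff (m - 1) + (m : A) * b := by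
  rw [Polynomial.taylor_coeff]
  have hH : Polynomial.hasseDeriv (m - 1) P = C (P.coeff (m - 1)) + C ((m : A)) * X := by
    ext n
    rw [Polynomial.hasseDeriv_coeff]
    match n with
    | 0 =>
        rw [Nat.zero_add, Nat.choose_self, Nat.cast_one, one_mul]
        simp
    | 1 =>
        have h1 : 1 + (m - 1) = m := by omega
        have h2 : m.choose (m - 1) = m := by
          have := Nat.choose_symm (show 1 ≤ m by omega) (n := m)
          rw [this, Nat.choose_one_right]
        rw [h1, h2, ← hPd, hP.coeff_natDegree, mul_one]
        simp
    | (n + 2) =>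
        rw [Polynomial.coeff_eq_zero_of_natDegree_lt (by omega), mul_zero]
        rw [Polynomial.coeff_add, Polynomial.coeff_C, if_neg (by omega)]
        rw [Polynomial.coeff_C_mul, Polynomial.coeff_X, if_neg (by omega)]
        ring
  rw [hH]
  simp [Polynomial.eval_add, Polynomial.eval_C, Polynomial.eval_mul, Polynomial.eval_X]

/-- Taylor shift commutes with `map`. -/
theorem taylor_map_comm {A B : Type*} [CommRing A] [CommRing B] (f : A →+* B) (b : A)
    (P : Polynomial A) : (Polynomial.taylor b P).map f = Polynomial.taylor (f b) (P.map f) := by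
  rw [Polynomial.taylor_apply, Polynomial.taylor_apply, Polynomial.map_comp]
  congr 1
  rw [Polynomial.map_add, Polynomial.map_X, Polynomial.map_C]

theorem main_aux (n : ℕ) : ∀ P : Polynomial O, P.Monic → ∀ μ : ℂ, (P.map ρ).IsRoot μ →
    P.natDegree + (P.map ρ).rootMultiplicity μ ≤ n →
    ∃ ν : O, P.eval ν = 0 ∧ ρ ν = μ := by
  induction n using Nat.strong_induction_on with
  | _ n IH =>
  intro P hP μ hroot hn
  classical
  set m := P.natDegree with hm
  have hPmapm : (P.map ρ).Monic := hP.map ρ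
  have hPmapd : (P.map ρ).natDegree = m := hP.natDegree_map ρ
  have hm1 : 1 ≤ m := by
    by_contra h0
    have hm0 : m = 0 := by omega
    have hP1 : P = 1 := hP.natDegree_eq_zero.1 hm0
    rw [hP1] at hroot
    simp [Polynomial.IsRoot] at hroot
  set k := (P.map ρ).rootMultiplicity μ with hk
  have hk1 : 1 ≤ k := (Polynomial.rootMultiplicity_pos hPmapm.ne_zero).2 hroot
  have hkm : k ≤ m := by
    have h1 := Polynomial.pow_rootMultiplicity_dvd (P.map ρ) μ
    have h2 := Polynomial.natDegree_le_of_dvd h1 hPmapm.ne_zero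
    rwa [Polynomial.natDegree_pow, Polynomial.natDegree_X_sub_C, mul_one, hPmapd] at h2
  by_cases hmeq : m = 1
  · -- linear case
    have hPX : P = X + C (P.coeff 0) := hP.eq_X_add_C (by omega)
    refine ⟨-(P.coeff 0), ?_, ?_⟩
    · rw [hPX]
      simp
    · have : (P.map ρ).eval μ = 0 := hroot
      rw [hPX] at this
      simp only [Polynomial.map_add, Polynomial.map_X, Polynomial.map_C, Polynomial.eval_add,
        Polynomial.eval_X, Polynomial.eval_C] at this
      rw [map_neg]
      linear_combination -this
  · by_cases hklt : k < m
    · -- Hensel branch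
      set gc : Polynomial ℂ := (X - C μ) ^ k with hgc
      set hcp : Polynomial ℂ := (P.map ρ) /ₘ gc with hhcp
      have hfact : gc * hcp = P.map ρ :=
        Polynomial.pow_mul_divByMonic_rootMultiplicity_eq (P.map ρ) μ
      have hceval : hcp.eval μ ≠ 0 :=
        Polynomial.eval_divByMonic_pow_rootMultiplicity_ne_zero μ hPmapm.ne_zero
      have hgcm : gc.Monic := (Polynomial.monic_X_sub_C μ).pow k
      have hhcm : hcp.Monic := hgcm.of_mul_monic_left (hfact.symm ▸ hPmapm)
      have hgcd : gc.natDegree = k := by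
        rw [hgc, Polynomial.natDegree_pow, Polynomial.natDegree_X_sub_C, mul_one]
      have hhcd : hcp.natDegree = m - k := by
        have := congrArg Polynomial.natDegree hfact
        rw [hgcm.natDegree_mul hhcm, hgcd, hPmapd] at this
        omega
      have hcop : IsCoprime gc hcp := by
        refine IsCoprime.symm ?_
        exact Irreducible.coprime_pow_of_not_dvd k (Polynomial.irreducible_X_sub_C μ)
          (by rw [Polynomial.dvd_iff_isRoot]; exact hceval)
      obtain ⟨uc, wc, hbezc⟩ := hcop
      obtain ⟨G, H, hGm, hGd, hfGH, hGres⟩ :=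
        hensel_O P hP rfl hk1 hklt gc hcp uc wc hgcm hgcd hhcm hhcd hbezc hfact.symm
      have hGroot : (G.map ρ).IsRoot μ := by
        show Polynomial.eval μ (G.map ρ) = 0
        rw [hGres, hgc, Polynomial.eval_pow, Polynomial.eval_sub, Polynomial.eval_X,
          Polynomial.eval_C, sub_self, zero_pow (show k ≠ 0 by omega)]
      have hGmult : (G.map ρ).rootMultiplicity μ = k := by
        rw [hGres, hgc]
        exact Polynomial.rootMultiplicity_X_sub_C_pow μ k
      obtain ⟨ν, hν, hνres⟩ := IH (k + k) (by omega) G hGm μ hGroot (by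
        rw [hGd, hGmult])
      refine ⟨ν, ?_, hνres⟩
      rw [hfGH, Polynomial.eval_mul, hν, zero_mul]
    · -- ramified branch : k = m
      have hkeq : k = m := by omega
      have hm2 : 2 ≤ m := by omega
      have hPres : P.map ρ = (X - C μ) ^ m :=
        eq_pow_of_rootMultiplicity_ge hPmapm hPmapd (hkeq ▸ le_rfl)
      -- Tschirnhaus shift
      set a : O := P.coeff (m - 1) with ha
      set b : O := -(ι ((m : ℂ)⁻¹) * a) with hb
      have hmC : (m : ℂ) ≠ 0 := by exact_mod_cast by omega
      have hρa : ρ a = -μ * m := by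
        have h1 : (P.map ρ).coeff (m - 1) = ρ a := by rw [Polynomial.coeff_map]
        rw [hPres] at h1
        have hrw : (X - C μ) = (X + C (-μ)) := by rw [map_neg, sub_eq_add_neg]
        rw [hrw, Polynomial.coeff_X_add_C_pow] at h1
        have h2' : m - (m - 1) = 1 := by omega
        have h3' : m.choose (m - 1) = m := by
          have := Nat.choose_symm (show 1 ≤ m by omega) (n := m)
          rw [this, Nat.choose_one_right]
        rw [h2', pow_one, h3'] at h1
        exact h1.symm
      have hρb : ρ b = μ := by
        rw [hb, map_neg, map_mul, ρ_ι, hρa]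
        field_simp
      set Q : Polynomial O := Polynomial.taylor b P with hQ
      have hQd : Q.natDegree = m := by rw [hQ, Polynomial.natDegree_taylor, hm]
      have hQtop : Q.coeff m = 1 := taylor_coeff_top hP rfl b
      have hQm : Q.Monic := by
        have : Q.leadingCoeff = 1 := by rw [Polynomial.leadingCoeff, hQd, hQtop]
        exact this
      have hQsub : Q.coeff (m - 1) = 0 := by
        rw [hQ, taylor_coeff_subtop hP rfl hm1 b, hb]
        have hmb : (m : O) = ι (m : ℂ) := by rw [map_natCast]
        rw [hmb, mul_neg, ← mul_assoc, ← map_mul]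
        rw [mul_inv_cancel₀ hmC, map_one, one_mul, add_neg_cancel]
      have hQres : Q.map ρ = X ^ m := by
        rw [hQ, taylor_map_comm, hρb, hPres, Polynomial.taylor_apply]
        rw [Polynomial.pow_comp, Polynomial.sub_comp, Polynomial.X_comp, Polynomial.C_comp]
        rw [add_sub_cancel_right]
      by_cases hQ0 : Q.coeff 0 = 0
      · refine ⟨b, ?_, hρb⟩
        have h5 := Polynomial.taylor_eval b P 0
        rw [zero_add] at h5
        have h6 : Q.eval 0 = 0 := by
          rw [← Polynomial.coeff_zero_eq_eval_zero]
          exact hQ0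
        rw [show (Polynomial.taylor b) P = Q from hQ.symm, h6] at h5
        exact h5.symm
      · -- Newton polygon step
        have hQcoeff_reszero : ∀ j, j < m → ρ (Q.coeff j) = 0 := by
          intro j hj
          have h1 : (Q.map ρ).coeff j = ρ (Q.coeff j) := Polynomial.coeff_map _ _
          rw [hQres, Polynomial.coeff_X_pow, if_neg (by omega)] at h1
          exact h1.symm
        set S : Finset ℕ := (Finset.range m).filter (fun j => Q.coeff j ≠ 0) with hS
        have hS0 : (0 : ℕ) ∈ S := by
          rw [hS, Finset.mem_filter, Finset.mem_range]
          exact ⟨by omega, hQ0⟩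
        have hSne : S.Nonempty := ⟨0, hS0⟩
        have hSlt : ∀ j ∈ S, j < m := fun j hj => Finset.mem_range.1 (Finset.mem_filter.1 hj).1
        have hSne0 : ∀ j ∈ S, Q.coeff j ≠ 0 := fun j hj => (Finset.mem_filter.1 hj).2
        have hSord : ∀ j ∈ S, 0 < ((Q.coeff j : O) : HahnSeries ℚ ℂ).order := fun j hj =>
          order_pos_of_res_zero (hSne0 j hj) (hQcoeff_reszero j (hSlt j hj))
        have hSden : ∀ j ∈ S, (0 : ℚ) < (m : ℚ) - j := by
          intro j hj
          have h1 : (j : ℚ) < m := by exact_mod_cast hSlt j hj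
          linarith
        set γ : ℚ :=
          S.inf' hSne (fun j => ((Q.coeff j : O) : HahnSeries ℚ ℂ).order / ((m : ℚ) - j)) with hγ
        have hγpos : 0 < γ := by
          rw [hγ, Finset.lt_inf'_iff]
          intro j hj
          exact div_pos (hSord j hj) (hSden j hj)
        have hγle : ∀ j ∈ S, γ * ((m : ℚ) - j) ≤ ((Q.coeff j : O) : HahnSeries ℚ ℂ).order := by
          intro j hj
          have h1 : γ ≤ ((Q.coeff j : O) : HahnSeries ℚ ℂ).order / ((m : ℚ) - j) :=
            Finset.inf'_le _ hj
          rwa [le_div_iff₀ (hSden j hj)] at h1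
        obtain ⟨j₀, hj₀S, hj₀eq⟩ := Finset.exists_mem_eq_inf' hSne
          (fun j => ((Q.coeff j : O) : HahnSeries ℚ ℂ).order / ((m : ℚ) - j))
        have hj₀lt : j₀ < m := hSlt j₀ hj₀S
        rw [← hγ] at hj₀eq
        have hj₀ord : ((Q.coeff j₀ : O) : HahnSeries ℚ ℂ).order = ((m : ℚ) - j₀) * γ := by
          rw [eq_div_iff (ne_of_gt (hSden j₀ hj₀S))] at hj₀eq
          rw [← hj₀eq]
          ring
        have hvge : ∀ j, j ≤ m → Vge (((m : ℚ) - j) * γ) ((Q.coeff j : O) : HahnSeries ℚ ℂ) := by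
          intro j hj
          by_cases hje : j = m
          · have heq0 : ((m : ℚ) - j) * γ = 0 := by rw [hje]; ring
            rw [heq0]
            exact vge_coe _
          · by_cases hjS : j ∈ S
            · have h1 := hγle j hjS
              rw [mul_comm] at h1
              exact vge_order.mono h1
            · have hz : Q.coeff j = 0 := by
                by_contra hnz
                exact hjS (by rw [hS, Finset.mem_filter, Finset.mem_range]; exact ⟨by omega, hnz⟩)
              rw [hz, ZeroMemClass.coe_zero]
              exact Vge.zero _
        have hvalmem : ∀ j, j ≤ m →
            (HahnSeries.single (((j : ℚ) - m) * γ) 1 * ((Q.coeff j : O) : HahnSeries ℚ ℂ)) ∈ O := by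
          intro j hj
          constructor
          · exact (LeviCivitaField ℂ).mul_mem (dpow (((j : ℚ) - m) * γ)).2 (Q.coeff j).2.1
          · have h1 := (vge_single (γ := ((j : ℚ) - m) * γ) (1 : ℂ)).mul (hvge j hj)
            have heq : ((j : ℚ) - m) * γ + ((m : ℚ) - j) * γ = 0 := by ring
            rwa [heq] at h1
        set rfun : ℕ → O := fun j => if h : j ≤ m then
            ⟨HahnSeries.single (((j : ℚ) - m) * γ) 1 * ((Q.coeff j : O) : HahnSeries ℚ ℂ),
              hvalmem j h⟩
          else 0 with hrfun
        set R : Polynomial O := ∑ j ∈ Finset.range (m + 1), C (rfun j) * X ^ j with hR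
        have hRcoeff : ∀ j, R.coeff j = if j ≤ m then rfun j else 0 := fun j =>
          coeff_sum_C_mul_X_pow rfun m j
        have hrfun_coe : ∀ j, ∀ h : j ≤ m, ((rfun j : O) : HahnSeries ℚ ℂ)
            = HahnSeries.single (((j : ℚ) - m) * γ) 1 * ((Q.coeff j : O) : HahnSeries ℚ ℂ) := by
          intro j h
          rw [hrfun]
          simp only [dif_pos h]
        have hRtop : R.coeff m = 1 := by
          rw [hRcoeff, if_pos le_rfl]
          apply Subtype.ext
          rw [hrfun_coe m le_rfl, hQtop]
          have h0 : ((m : ℚ) - m) * γ = 0 := by ring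
          rw [h0, HahnSeries.single_zero_one, one_mul]
        have hRm : R.Monic := by
          refine Polynomial.monic_of_natDegree_le_of_coeff_eq_one m ?_ hRtop
          rw [Polynomial.natDegree_le_iff_coeff_eq_zero]
          intro N hN
          rw [hRcoeff, if_neg (by omega)]
        have hRd : R.natDegree = m := by
          refine le_antisymm ?_ (Polynomial.le_natDegree_of_ne_zero ?_)
          · rw [Polynomial.natDegree_le_iff_coeff_eq_zero]
            intro N hN
            rw [hRcoeff, if_neg (by omega)]
          · rw [hRtop]
            exact one_ne_zero
        have hdγmem : (HahnSeries.single γ (1 : ℂ)) ∈ O :=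
          ⟨(dpow γ).2, (vge_single (1 : ℂ)).mono hγpos.le⟩
        set dγ : O := ⟨HahnSeries.single γ 1, hdγmem⟩ with hdγ
        have hscale : Polynomial.scaleRoots R dγ = Q := by
          apply Polynomial.ext
          intro j
          rw [Polynomial.coeff_scaleRoots, hRd]
          by_cases hj : j ≤ m
          · apply Subtype.ext
            rw [MulMemClass.coe_mul, SubmonoidClass.coe_pow, hRcoeff, if_pos hj,
              hrfun_coe j hj]
            show _ * (HahnSeries.single γ (1 : ℂ)) ^ (m - j) = _
            rw [HahnSeries.single_pow, one_pow, nsmul_eq_mul, Nat.cast_sub hj]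
            rw [mul_right_comm, HahnSeries.single_mul_single, mul_one]
            have heq : ((j : ℚ) - m) * γ + ((m : ℚ) - j) * γ = 0 := by ring
            rw [heq, HahnSeries.single_zero_one, one_mul]
          · rw [hRcoeff, if_neg hj, zero_mul,
              Polynomial.coeff_eq_zero_of_natDegree_lt (by omega)]
        have hRres_m1 : (R.map ρ).coeff (m - 1) = 0 := by
          rw [Polynomial.coeff_map, hRcoeff, if_pos (by omega)]
          have hz : rfun (m - 1) = 0 := by
            apply Subtype.ext
            rw [hrfun_coe (m - 1) (by omega), hQsub, ZeroMemClass.coe_zero, mul_zero]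
          rw [hz, map_zero]
        have hQj₀ne : ((Q.coeff j₀ : O) : HahnSeries ℚ ℂ) ≠ 0 :=
          fun h => hSne0 j₀ hj₀S (Subtype.ext h)
        have hRres_j₀ : (R.map ρ).coeff j₀ ≠ 0 := by
          rw [Polynomial.coeff_map, hRcoeff, if_pos (by omega), ρ_apply,
            hrfun_coe j₀ (by omega)]
          have hsm := HahnSeries.coeff_single_mul_add (r := (1 : ℂ))
            (x := ((Q.coeff j₀ : O) : HahnSeries ℚ ℂ)) (a := ((m : ℚ) - j₀) * γ)
            (b := ((j₀ : ℚ) - m) * γ)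
          have hab : ((m : ℚ) - j₀) * γ + ((j₀ : ℚ) - m) * γ = 0 := by ring
          rw [hab] at hsm
          rw [hsm, one_mul, ← hj₀ord]
          exact fun h => hQj₀ne (HahnSeries.coeff_order_eq_zero.1 h)
        obtain ⟨c, hcroot, hcmult⟩ := exists_root_mult_lt (hRm.map ρ)
          ((hRm.natDegree_map ρ).trans hRd) hm2 hRres_m1 hj₀lt hRres_j₀
        obtain ⟨ζ, hζ, hζres⟩ := IH (m + (R.map ρ).rootMultiplicity c) (by omega) R hRm c
          hcroot (by rw [hRd])
        set νq : O := dγ * ζ with hνq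
        refine ⟨νq + b, ?_, ?_⟩
        · have h1 : Polynomial.eval₂ O.subtype (O.subtype ζ) R = 0 := by
            rw [Polynomial.eval₂_at_apply, hζ, map_zero]
          have h2 := Polynomial.scaleRoots_eval₂_eq_zero O.subtype (s := dγ) h1
          rw [hscale] at h2
          have h3 : O.subtype dγ * O.subtype ζ = O.subtype νq := by
            rw [hνq, map_mul]
          rw [h3, Polynomial.eval₂_at_apply] at h2
          have h4 : Q.eval νq = 0 := Subtype.ext h2
          have h5 := Polynomial.taylor_eval b P νq
          rw [← hQ, h4] at h5
          exact h5.symm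
        · rw [map_add, hρb]
          have hz : ρ νq = 0 := by
            rw [ρ_apply, hνq, MulMemClass.coe_mul]
            show ((HahnSeries.single γ (1 : ℂ)) * (ζ : HahnSeries ℚ ℂ)).coeff 0 = 0
            have hsm := HahnSeries.coeff_single_mul_add (r := (1 : ℂ))
              (x := (ζ : HahnSeries ℚ ℂ)) (a := -γ) (b := γ)
            rw [neg_add_cancel] at hsm
            rw [hsm, one_mul]
            exact (vge_coe ζ) (-γ) (by linarith)
          rw [hz, zero_add]

end LCF

namespace LCF

open LeviCivitaField Polynomial

set_option synthInstance.maxHeartbeats 1000000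
set_option maxHeartbeats 3000000

theorem eval_charpoly_det {A : Type*} [CommRing A] {n : ℕ} (B : Matrix (Fin n) (Fin n) A)
    (x : A) :
    (Matrix.charpoly B).eval x = (Matrix.diagonal (fun _ : Fin n => x) - B).det := by
  rw [Matrix.charpoly, ← Polynomial.coe_evalRingHom, RingHom.map_det]
  congr 1
  rw [RingHom.mapMatrix_apply]
  apply Matrix.ext
  intro i j
  by_cases h : i = j
  · subst h
    rw [Matrix.map_apply, Matrix.charmatrix_apply_eq, Polynomial.coe_evalRingHom,
      Polynomial.eval_sub, Polynomial.eval_X, Polynomial.eval_C, Matrix.sub_apply,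
      Matrix.diagonal_apply_eq]
  · rw [Matrix.map_apply, Matrix.charmatrix_apply_ne _ _ _ h, Polynomial.coe_evalRingHom,
      Polynomial.eval_neg, Polynomial.eval_C, Matrix.sub_apply, Matrix.diagonal_apply_ne _ h,
      zero_sub]

theorem eval_charpoly_det' {A : Type*} [CommRing A] {n : ℕ} (B : Matrix (Fin n) (Fin n) A)
    (x : A) :
    (Matrix.charpoly B).eval x = (-1 : A) ^ n * (B - Matrix.diagonal (fun _ : Fin n => x)).det := by
  rw [eval_charpoly_det, ← neg_sub B (Matrix.diagonal fun _ : Fin n => x), Matrix.det_neg,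
    Fintype.card_fin]

theorem eval_zero_iff_det_zero {A : Type*} [CommRing A] {n : ℕ} (B : Matrix (Fin n) (Fin n) A)
    (x : A) :
    (Matrix.charpoly B).eval x = 0 ↔ (B - Matrix.diagonal (fun _ : Fin n => x)).det = 0 := by
  rw [eval_charpoly_det']
  exact IsUnit.mul_right_eq_zero ((isUnit_one.neg).pow n)

end LCF

open LeviCivitaField Polynomial

set_option synthInstance.maxHeartbeats 1000000
set_option maxHeartbeats 3000000

/-- for an at most finite matrix `A` over `𝒞`, `π(σ(A)) = σ(π(A))`. -/
theorem spectrum_pi (n : ℕ) (A : Matrix (Fin n) (Fin n) (LeviCivitaField ℂ))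
    (hAfin : ∀ i j, AtMostFinite (A i j)) (μ : ℂ) :
    ((Matrix.of fun i j => coeff (A i j) 0) - Matrix.diagonal (fun _ => μ)).det = 0 ↔
      ∃ ν : LeviCivitaField ℂ,
        (A - Matrix.diagonal (fun _ => ν)).det = 0 ∧ coeff ν 0 = μ := by
  classical
  have hmem : ∀ i j, ((A i j : HahnSeries ℚ ℂ)) ∈ LCF.O := fun i j =>
    ⟨(A i j).2, hAfin i j⟩
  set B : Matrix (Fin n) (Fin n) LCF.O :=
    Matrix.of fun i j => (⟨(A i j : HahnSeries ℚ ℂ), hmem i j⟩ : LCF.O) with hB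
  set χ : Polynomial LCF.O := Matrix.charpoly B with hχ
  have hχm : χ.Monic := B.charpoly_monic
  -- residue matrix
  have hπA : B.map LCF.ρ = Matrix.of fun i j => coeff (A i j) 0 := by
    ext i j
    rfl
  have hres_det : ∀ x : ℂ, ((χ.map LCF.ρ).eval x = 0 ↔
      ((Matrix.of fun i j => coeff (A i j) 0) - Matrix.diagonal (fun _ => x)).det = 0) := by
    intro x
    rw [hχ, ← Matrix.charpoly_map, hπA]
    exact LCF.eval_zero_iff_det_zero _ x
  -- Hahn series matrix
  set Φ : LCF.O →+* HahnSeries ℚ ℂ := LCF.O.subtype with hΦ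
  set Ψ : LeviCivitaField ℂ →+* HahnSeries ℚ ℂ := (LeviCivitaField ℂ).subtype with hΨ
  have hΨinj : Function.Injective Ψ := fun a b h => Subtype.ext h
  have hmap_eq : ∀ ν : LeviCivitaField ℂ,
      (A - Matrix.diagonal fun _ => ν).map Ψ
        = B.map Φ - Matrix.diagonal (fun _ => (ν : HahnSeries ℚ ℂ)) := by
    intro ν
    apply Matrix.ext
    intro i j
    rw [Matrix.map_apply, Matrix.sub_apply, Matrix.sub_apply, map_sub]
    have hentry : Ψ (A i j) = B.map Φ i j := rfl
    rw [hentry]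
    congr 1
    by_cases h : i = j
    · subst h
      rw [Matrix.diagonal_apply_eq, Matrix.diagonal_apply_eq]
      rfl
    · rw [Matrix.diagonal_apply_ne _ h, Matrix.diagonal_apply_ne _ h, map_zero]
  have hdet_iff : ∀ ν : LeviCivitaField ℂ,
      ((A - Matrix.diagonal fun _ => ν).det = 0 ↔
        Polynomial.eval₂ Φ (ν : HahnSeries ℚ ℂ) χ = 0) := by
    intro ν
    have h1 : Polynomial.eval₂ Φ (ν : HahnSeries ℚ ℂ) χ
        = (Matrix.charpoly (B.map Φ)).eval (ν : HahnSeries ℚ ℂ) := by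
      rw [← Polynomial.eval_map, hχ, Matrix.charpoly_map]
    have h2 := LCF.eval_zero_iff_det_zero (B.map Φ) (ν : HahnSeries ℚ ℂ)
    have h3 : (B.map Φ - Matrix.diagonal fun _ => (ν : HahnSeries ℚ ℂ)).det
        = Ψ ((A - Matrix.diagonal fun _ => ν).det) := by
      rw [RingHom.map_det, RingHom.mapMatrix_apply, hmap_eq]
    constructor
    · intro h
      rw [h1, h2, h3, h, map_zero]
    · intro h
      rw [h1, h2, h3] at h
      exact hΨinj (by rw [h, map_zero])
  constructor
  · -- forward
    intro hdet
    have hroot : (χ.map LCF.ρ).IsRoot μ := by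
      show (χ.map LCF.ρ).eval μ = 0
      rw [hres_det μ]
      exact hdet
    obtain ⟨ν₀, hν₀, hν₀res⟩ := LCF.main_aux
      (χ.natDegree + (χ.map LCF.ρ).rootMultiplicity μ) χ hχm μ hroot le_rfl
    refine ⟨⟨(ν₀ : HahnSeries ℚ ℂ), ν₀.2.1⟩, ?_, ?_⟩
    · rw [hdet_iff]
      have : Polynomial.eval₂ Φ (Φ ν₀) χ = Φ (χ.eval ν₀) := Polynomial.eval₂_at_apply Φ ν₀
      rw [show ((⟨(ν₀ : HahnSeries ℚ ℂ), ν₀.2.1⟩ : LeviCivitaField ℂ) : HahnSeries ℚ ℂ)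
        = Φ ν₀ from rfl, this, hν₀, map_zero]
    · exact hν₀res
  · -- backward
    rintro ⟨ν, hdet, hν0⟩
    have heval₂ : Polynomial.eval₂ Φ (ν : HahnSeries ℚ ℂ) χ = 0 := (hdet_iff ν).1 hdet
    have hνO : LCF.Vge 0 ((ν : HahnSeries ℚ ℂ)) :=
      LCF.vge_zero_of_monic_root hχm ν.2 heval₂
    set ν₀ : LCF.O := ⟨(ν : HahnSeries ℚ ℂ), ⟨ν.2, hνO⟩⟩ with hν₀def
    have hν₀eval : χ.eval ν₀ = 0 := by
      apply Subtype.ext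
      have : Polynomial.eval₂ Φ (Φ ν₀) χ = Φ (χ.eval ν₀) := Polynomial.eval₂_at_apply Φ ν₀
      have h2 : Φ (χ.eval ν₀) = 0 := by
        rw [← this]
        exact heval₂
      exact h2
    have hres : (χ.map LCF.ρ).eval μ = 0 := by
      have h1 : (χ.map LCF.ρ).eval (LCF.ρ ν₀) = LCF.ρ (χ.eval ν₀) := by
        rw [Polynomial.eval_map]
        exact Polynomial.eval₂_at_apply LCF.ρ ν₀
      have h2 : LCF.ρ ν₀ = μ := hν0
      rw [← h2, h1, hν₀eval, map_zero]
    rw [← hres_det μ]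
    exact hres
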